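/- arXiv:1112.3741 — 11 statements merged into one kernel-verified Lean document; each statement's English description precedes it below -/
import Mathlib

section
/- Fix λ > 0, C > 0 and ρ > 0, and consider the goodput-based medium access game. Then: (i) if ρ ≥ 1, p* = 0 is an SNE; (ii) if ρ ≤ exp(−λC), p* = 1 is an SNE; (iii) if exp(−λC) < ρ < 1, then p* = (−log ρ)/(λC) lies in (0,1) and is an SNE. -/
/-! A tagged node's utility `p' * (exp (-p λ C) - ρ)` is linear in its own access probability `p'`,
so its best responses are `p' = 0` when the slope is negative, `p' = 1` when it is positive, and
anything when it vanishes. At `p = 0` the slope is `1 - ρ`, at `p = 1` it is `exp (-λ C) - ρ`, and it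
vanishes exactly at `p = -log ρ / (λ C)`, which lies in `(0, 1)` because `log` is increasing:
`-λ C < log ρ < 0`. -/

open Real Set

def IsSymmetricNashEquilibrium (U : ℝ → ℝ → ℝ) (p : ℝ) : Prop :=
  ∀ q ∈ Icc (0 : ℝ) 1, U q p ≤ U p p

section LinearInOwnStrategy

variable (g : ℝ → ℝ)

theorem isSymmetricNashEquilibrium_zero_of_nonpos (h : g 0 ≤ 0) :
    IsSymmetricNashEquilibrium (fun q p ↦ q * g p) 0 := fun _ hq ↦ by
  simpa only [zero_mul] using mul_nonpos_of_nonneg_of_nonpos hq.1 h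

theorem isSymmetricNashEquilibrium_one_of_nonneg (h : 0 ≤ g 1) :
    IsSymmetricNashEquilibrium (fun q p ↦ q * g p) 1 := fun _ hq ↦ by
  simpa only [one_mul] using mul_le_of_le_one_left h hq.2

theorem isSymmetricNashEquilibrium_of_eq_zero {p : ℝ} (h : g p = 0) :
    IsSymmetricNashEquilibrium (fun q p ↦ q * g p) p := fun _ _ ↦ by
  simp only [h, mul_zero, le_refl]

end LinearInOwnStrategy

theorem neg_log_div_mem_Ioo {a ρ : ℝ} (hlo : exp (-a) < ρ) (hhi : ρ < 1) :
    -log ρ / a ∈ Ioo 0 1 := by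
  have hρ : 0 < ρ := (exp_pos _).trans hlo
  have hlog_neg : log ρ < 0 := log_neg hρ hhi
  have hlog_gt : -a < log ρ := (lt_log_iff_exp_lt hρ).mpr hlo
  have ha : 0 < a := by linarith
  exact ⟨div_pos (neg_pos.mpr hlog_neg) ha, (div_lt_one ha).mpr (by linarith)⟩

theorem exp_neg_neg_log_div_mul_mul {lam C ρ : ℝ} (hρ : 0 < ρ) (hlC : lam * C ≠ 0) :
    exp (-(-log ρ / (lam * C) * lam * C)) = ρ := by
  rw [mul_assoc, div_mul_cancel₀ _ hlC, neg_neg, exp_log hρ]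

theorem stmt_3_general (lam C ρ : ℝ) :
    (1 ≤ ρ → ∀ q ∈ Set.Icc (0:ℝ) 1,
      q * (Real.exp (-((0:ℝ) * lam * C)) - ρ) ≤
        0 * (Real.exp (-((0:ℝ) * lam * C)) - ρ)) ∧
    (ρ ≤ Real.exp (-(lam * C)) → ∀ q ∈ Set.Icc (0:ℝ) 1,
      q * (Real.exp (-((1:ℝ) * lam * C)) - ρ) ≤
        1 * (Real.exp (-((1:ℝ) * lam * C)) - ρ)) ∧
    (Real.exp (-(lam * C)) < ρ → ρ < 1 →
      (-Real.log ρ / (lam * C)) ∈ Set.Ioo (0:ℝ) 1 ∧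
      ∀ q ∈ Set.Icc (0:ℝ) 1,
        q * (Real.exp (-((-Real.log ρ / (lam * C)) * lam * C)) - ρ) ≤
          (-Real.log ρ / (lam * C)) *
            (Real.exp (-((-Real.log ρ / (lam * C)) * lam * C)) - ρ)) := by
  let slope p := exp (-(p * lam * C)) - ρ
  refine ⟨fun hρ ↦ ?_, fun hρ ↦ ?_, fun hlo hhi ↦ ?_⟩
  · refine isSymmetricNashEquilibrium_zero_of_nonpos slope ?_
    simpa only [slope, zero_mul, neg_zero, exp_zero, sub_nonpos] using hρ
  · refine isSymmetricNashEquilibrium_one_of_nonneg slope ?_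
    simpa only [slope, one_mul, sub_nonneg] using hρ
  · have hlC : 0 < lam * C := by
      simpa only [exp_lt_one_iff, neg_lt_zero] using hlo.trans hhi
    refine ⟨neg_log_div_mem_Ioo hlo hhi, isSymmetricNashEquilibrium_of_eq_zero slope ?_⟩
    simp only [slope, exp_neg_neg_log_div_mul_mul ((exp_pos _).trans hlo) hlC.ne', sub_self]

/-- In the goodput-based medium access game with utility
`U(p′,p) = p′(exp(−pλC) − ρ)`: (i) if `ρ ≥ 1` then `p* = 0` is an SNE;
(ii) if `ρ ≤ exp(−λC)` then `p* = 1` is an SNE; (iii) if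
`exp(−λC) < ρ < 1` then `p* = (−log ρ)/(λC) ∈ (0,1)` is an SNE. -/
theorem stmt_3 (lam C ρ : ℝ) (hlam : 0 < lam) (hC : 0 < C) (hρ : 0 < ρ) :
    (1 ≤ ρ → ∀ q ∈ Set.Icc (0:ℝ) 1,
      q * (Real.exp (-((0:ℝ) * lam * C)) - ρ) ≤
        0 * (Real.exp (-((0:ℝ) * lam * C)) - ρ)) ∧
    (ρ ≤ Real.exp (-(lam * C)) → ∀ q ∈ Set.Icc (0:ℝ) 1,
      q * (Real.exp (-((1:ℝ) * lam * C)) - ρ) ≤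
        1 * (Real.exp (-((1:ℝ) * lam * C)) - ρ)) ∧
    (Real.exp (-(lam * C)) < ρ → ρ < 1 →
      (-Real.log ρ / (lam * C)) ∈ Set.Ioo (0:ℝ) 1 ∧
      ∀ q ∈ Set.Icc (0:ℝ) 1,
        q * (Real.exp (-((-Real.log ρ / (lam * C)) * lam * C)) - ρ) ≤
          (-Real.log ρ / (lam * C)) *
            (Real.exp (-((-Real.log ρ / (lam * C)) * lam * C)) - ρ)) :=
  stmt_3_general lam C ρ
end

section
/- Fix λ > 0 and C > 0. Define the equilibrium density of success E(ρ) for ρ > 0 by E(ρ) = 0 if ρ ≥ 1, E(ρ) = λ exp(−λC) if ρ ≤ exp(−λC), and E(ρ) = λ(−ρ log ρ)/(λC) if exp(−λC) < ρ < 1. Then the supremum of E(ρ) over ρ > 0 equals the global optimal density of success, namely 1/(eC) if λC > 1 and λ exp(−λC) if λC ≤ 1; moreover this supremum is attained at ρ* = 1/e when λC > 1 and at ρ* = exp(−λC) when λC ≤ 1. -/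
open Classical in
/-- The equilibrium density of success in the goodput-based game. -/
noncomputable def equilibriumDensityOfSuccess (lam C ρ : ℝ) : ℝ :=
  if 1 ≤ ρ then 0
  else if ρ ≤ Real.exp (-(lam * C)) then lam * Real.exp (-(lam * C))
  else lam * (-ρ * Real.log ρ) / (lam * C)

/-!
Substituting `ρ = exp (-t)` with `t > 0` (the range `ρ ≥ 1` contributes `0`), the equilibrium
density of success becomes `f (min t (λC)) / C` with `f t = t exp (-t)`. The function `f` is
increasing on `(-∞, 1]` and bounded by its value `exp (-1)` at `t = 1`, so the supremum is
`f 1 / C = 1 / (e C)`, at `ρ = 1 / e`, when `λC > 1`, and `f (λC) / C = λ exp (-λC)`, at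
`ρ = exp (-λC)`, when `λC ≤ 1`.
-/

open Real

lemma monotoneOn_mul_exp_neg : MonotoneOn (fun t : ℝ ↦ t * exp (-t)) (Set.Iic 1) := by
  have hderiv (t : ℝ) : HasDerivAt (fun t : ℝ ↦ t * exp (-t)) ((1 - t) * exp (-t)) t :=
    ((hasDerivAt_id' t).mul (hasDerivAt_neg' t).exp).congr_deriv (by ring)
  refine monotoneOn_of_deriv_nonneg (convex_Iic 1) (by fun_prop) (by fun_prop) fun t ht ↦ ?_
  rw [interior_Iic, Set.mem_Iio] at ht
  rw [(hderiv t).deriv]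
  exact mul_nonneg (by linarith) (exp_pos _).le

lemma equilibriumDensityOfSuccess_of_one_le {lam C ρ : ℝ} (hρ : 1 ≤ ρ) :
    equilibriumDensityOfSuccess lam C ρ = 0 :=
  if_pos hρ

lemma equilibriumDensityOfSuccess_exp_neg {lam C t : ℝ} (hlam : lam ≠ 0) (hC : C ≠ 0)
    (ht : 0 < t) :
    equilibriumDensityOfSuccess lam C (exp (-t)) =
      min t (lam * C) * exp (-min t (lam * C)) / C := by
  unfold equilibriumDensityOfSuccess
  rw [if_neg (by simpa using ht)]
  split_ifs with h
  · rw [min_eq_right (by simpa using h)]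
    field_simp
  · rw [min_eq_left (by simpa using (not_le.mp h).le), log_exp]
    field_simp

lemma equilibriumDensityOfSuccess_le {lam C M : ℝ} (hlam : 0 < lam) (hC : 0 < C) (hM : 0 ≤ M)
    (hbound : ∀ t, 0 < t → t ≤ lam * C → t * exp (-t) / C ≤ M) :
    ∀ ρ > 0, equilibriumDensityOfSuccess lam C ρ ≤ M := by
  intro ρ hρ
  rcases le_or_gt 1 ρ with h1 | h1
  · rwa [equilibriumDensityOfSuccess_of_one_le h1]
  have ht : 0 < -log ρ := neg_pos.mpr (log_neg hρ h1)
  rw [← exp_log hρ, ← neg_neg (log ρ), equilibriumDensityOfSuccess_exp_neg hlam.ne' hC.ne' ht]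
  exact hbound _ (lt_min ht (mul_pos hlam hC)) (min_le_right _ _)

/-- The supremum over `ρ > 0` of the equilibrium density of
success equals the global optimal density of success, namely `1/(eC)` if
`λC > 1` (attained at `ρ* = 1/e`) and `λ exp(−λC)` if `λC ≤ 1` (attained at
`ρ* = exp(−λC)`). -/
theorem stmt_5 (lam C : ℝ) (hlam : 0 < lam) (hC : 0 < C) :
    (1 < lam * C →
      (∀ ρ > (0:ℝ), equilibriumDensityOfSuccess lam C ρ ≤ 1 / (Real.exp 1 * C)) ∧
      equilibriumDensityOfSuccess lam C (1 / Real.exp 1) = 1 / (Real.exp 1 * C)) ∧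
    (lam * C ≤ 1 →
      (∀ ρ > (0:ℝ),
        equilibriumDensityOfSuccess lam C ρ ≤ lam * Real.exp (-(lam * C))) ∧
      equilibriumDensityOfSuccess lam C (Real.exp (-(lam * C))) =
        lam * Real.exp (-(lam * C))) := by
  have hlC : 0 < lam * C := mul_pos hlam hC
  have hoptimal : lam * C * exp (-(lam * C)) / C = lam * exp (-(lam * C)) := by
    field_simp
  refine ⟨fun hlarge ↦ ⟨?_, ?_⟩, fun hsmall ↦ ⟨?_, ?_⟩⟩
  · refine equilibriumDensityOfSuccess_le hlam hC (by positivity) fun t _ _ ↦ ?_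
    calc t * exp (-t) / C ≤ exp (-1) / C := by gcongr; exact mul_exp_neg_le_exp_neg_one t
      _ = 1 / (exp 1 * C) := by rw [exp_neg]; field_simp
  · rw [one_div, ← exp_neg, equilibriumDensityOfSuccess_exp_neg hlam.ne' hC.ne' one_pos,
      min_eq_left hlarge.le, exp_neg]
    field_simp
  · refine equilibriumDensityOfSuccess_le hlam hC (by positivity) fun t ht htC ↦ ?_
    rw [← hoptimal]
    exact div_le_div_of_nonneg_right (monotoneOn_mul_exp_neg (htC.trans hsmall) hsmall htC) hC.le
  · rw [equilibriumDensityOfSuccess_exp_neg hlam.ne' hC.ne' hlC, min_self, hoptimal]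
end

section
/- Fix λ > 0, C̄ > 0 and ρ > 0 with eλC̄ > √ρ (e the base of the natural logarithm). Then p* = 1 is a symmetric Nash equilibrium of the delay-based medium access game, and it is the unique SNE. -/
/-!
Against opponents playing `p`, a deviation from `p` to `q > p` changes the utility by
`(q - p) * (A / (p * q) - ρ)` with `A = exp (p λ C)`, so it pays off as soon as `ρ p q < A`.
From `e x ≤ exp x` and `√ρ < e λ C̄` we get `ρ p² < exp (2 p λ C̄) = A`; hence for `p < 1` the
deviation to `q = min 1 √(A / ρ)` is profitable, while at `p = 1` no `q < 1` is.
-/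

open Real

lemma mul_sq_lt_exp_two_mul {ρ t p : ℝ} (hρ : 0 ≤ ρ) (h : √ρ < exp 1 * t) (hp : 0 < p) :
    ρ * p ^ 2 < exp (2 * (p * t)) :=
  calc ρ * p ^ 2 = (√ρ * p) ^ 2 := by rw [mul_pow, sq_sqrt hρ]
    _ < (exp 1 * (p * t)) ^ 2 := by
        have : √ρ * p < exp 1 * t * p := mul_lt_mul_of_pos_right h hp
        exact pow_lt_pow_left₀ (by linarith) (by positivity) two_ne_zero
    _ ≤ exp (p * t) ^ 2 := by
        have : 0 ≤ exp 1 * (p * t) := by nlinarith [sqrt_nonneg ρ, exp_pos 1]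
        exact pow_le_pow_left₀ this exp_one_mul_le_exp 2
    _ = exp (2 * (p * t)) := by rw [← exp_nat_mul]; norm_num

lemma neg_div_sub_mul_lt_of_mul_lt {A ρ p q : ℝ} (hp : 0 < p) (hpq : p < q)
    (h : ρ * p * q < A) : -A / p - ρ * p < -A / q - ρ * q := by
  have hq : 0 < q := hp.trans hpq
  have hgain : -A / q - ρ * q - (-A / p - ρ * p) = (q - p) * (A - ρ * p * q) / (p * q) := by
    field_simp
    ring
  have : 0 < (q - p) * (A - ρ * p * q) / (p * q) := by
    apply div_pos (mul_pos _ _) (mul_pos hp hq) <;> linarith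
  linarith

theorem stmt_7_general (lam Cb ρ : ℝ) (hρ : 0 < ρ)
    (h : Real.sqrt ρ < Real.exp 1 * lam * Cb) :
    (∀ q ∈ Set.Ioc (0:ℝ) 1,
      -Real.exp ((1:ℝ) * lam * (2 * Cb)) / q - ρ * q ≤
        -Real.exp ((1:ℝ) * lam * (2 * Cb)) / 1 - ρ * 1) ∧
    (∀ p ∈ Set.Ioc (0:ℝ) 1,
      (∀ q ∈ Set.Ioc (0:ℝ) 1,
        -Real.exp (p * lam * (2 * Cb)) / q - ρ * q ≤
          -Real.exp (p * lam * (2 * Cb)) / p - ρ * p) → p = 1) := by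
  have key : ∀ p > 0, ρ * p ^ 2 < exp (p * lam * (2 * Cb)) := fun p hp => by
    rw [show p * lam * (2 * Cb) = 2 * (p * (lam * Cb)) by ring]
    exact mul_sq_lt_exp_two_mul hρ.le (by rwa [← mul_assoc]) hp
  refine ⟨fun q ⟨hq0, hq1⟩ => ?_, fun p ⟨hp0, hp1⟩ hbest => ?_⟩
  · rcases hq1.lt_or_eq with hq1 | rfl
    · exact (neg_div_sub_mul_lt_of_mul_lt hq0 hq1 (by nlinarith [key 1 one_pos])).le
    · rfl
  · by_contra hp
    set A := exp (p * lam * (2 * Cb))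
    set q := min 1 √(A / ρ)
    have hpq : p < q :=
      lt_min (hp1.lt_of_ne hp) (lt_sqrt_of_sq_lt ((lt_div_iff₀' hρ).mpr (key p hp0)))
    have hq_sq : ρ * q ^ 2 ≤ A := by
      have : q ^ 2 ≤ A / ρ := by
        rw [← sq_sqrt (div_nonneg (exp_pos _).le hρ.le)]
        exact pow_le_pow_left₀ (hp0.trans hpq).le (min_le_right _ _) 2
      rwa [le_div_iff₀' hρ] at this
    have hgain : ρ * p * q < A := by nlinarith [mul_lt_mul_of_pos_left hpq (mul_pos hρ (hp0.trans hpq))]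
    exact (hbest q ⟨hp0.trans hpq, min_le_left _ _⟩).not_gt
      (neg_div_sub_mul_lt_of_mul_lt hp0 hpq hgain)

/-- In the delay-based medium access game with utility
`U(p′,p) = −exp(pλC)/p′ − ρp′` (where `C = 2C̄`), if `eλC̄ > √ρ` then
`p* = 1` is a symmetric Nash equilibrium, and it is the unique SNE. -/
theorem stmt_7 (lam Cb ρ : ℝ) (hlam : 0 < lam) (hCb : 0 < Cb) (hρ : 0 < ρ)
    (h : Real.sqrt ρ < Real.exp 1 * lam * Cb) :
    (∀ q ∈ Set.Ioc (0:ℝ) 1,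
      -Real.exp ((1:ℝ) * lam * (2 * Cb)) / q - ρ * q ≤
        -Real.exp ((1:ℝ) * lam * (2 * Cb)) / 1 - ρ * 1) ∧
    (∀ p ∈ Set.Ioc (0:ℝ) 1,
      (∀ q ∈ Set.Ioc (0:ℝ) 1,
        -Real.exp (p * lam * (2 * Cb)) / q - ρ * q ≤
          -Real.exp (p * lam * (2 * Cb)) / p - ρ * p) → p = 1) :=
  stmt_7_general lam Cb ρ hρ h
end

section
/- Fix λ > 0, C̄ > 0 and ρ > 0 with eλC̄ ≤ √ρ and λC̄ ≥ 1. Then there exists p ∈ (0, 1/(λC̄)] with p√ρ = exp(pλC̄), and any p ∈ (0,1] satisfying p√ρ = exp(pλC̄) is a symmetric Nash equilibrium of the delay-based medium access game. -/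
/-!
Squaring `p √ρ = exp (p λ C̄)` gives `exp (p λ C) = ρ p²`, so against `p` the tagged node's
utility is `U(q, p) = -ρ (p² / q + q)`, which is maximised at `q = p` by AM–GM. Existence is the
intermediate value theorem for `p ↦ p √ρ - exp (p λ C̄)`, which is `-1` at `0` and, because
`e λ C̄ ≤ √ρ`, nonnegative at `1 / (λ C̄)`.
-/

open Real Set

/-- The utility `U(q, p)` of a node using MAP `q` when all other nodes use MAP `p`. -/
noncomputable def accessUtility (lam C ρ q p : ℝ) : ℝ :=
  -exp (p * lam * C) / q - ρ * q

lemma exists_mem_Ioc_mul_eq_exp {a s : ℝ} (ha : 0 < a) (hs : exp 1 * a ≤ s) :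
    ∃ p ∈ Ioc 0 (1 / a), p * s = exp (p * a) := by
  let f : ℝ → ℝ := fun p => p * s - exp (p * a)
  have hf0 : f 0 = -1 := by simp [f]
  have hf1 : 0 ≤ f (1 / a) := by
    have : exp 1 ≤ 1 / a * s := by
      rw [one_div_mul_eq_div, le_div_iff₀ ha]
      exact hs
    simp only [f, one_div_mul_cancel ha.ne']
    linarith
  have hcont : ContinuousOn f (Icc 0 (1 / a)) := by fun_prop
  obtain ⟨p, hp, hfp⟩ := intermediate_value_Ioc (by positivity) hcont
    (show (0 : ℝ) ∈ Ioc (f 0) (f (1 / a)) by rw [hf0]; exact ⟨by norm_num, hf1⟩)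
  exact ⟨p, hp, sub_eq_zero.mp hfp⟩

lemma exp_two_mul_eq_mul_sq {ρ p x : ℝ} (hρ : 0 ≤ ρ) (h : p * √ρ = exp x) :
    exp (2 * x) = ρ * p ^ 2 := by
  rw [two_mul, exp_add, ← h, mul_mul_mul_comm, mul_self_sqrt hρ]
  ring

lemma accessUtility_le_self {lam C ρ p q : ℝ} (hρ : 0 ≤ ρ) (hp : 0 < p) (hq : 0 < q)
    (h : exp (p * lam * C) = ρ * p ^ 2) :
    accessUtility lam C ρ q p ≤ accessUtility lam C ρ p p := by
  have amgm : 2 * p ≤ p ^ 2 / q + q := by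
    rw [div_add' _ _ _ hq.ne', le_div_iff₀ hq]
    nlinarith [sq_nonneg (p - q)]
  calc accessUtility lam C ρ q p = -(ρ * (p ^ 2 / q + q)) := by
        rw [accessUtility, h]; ring
    _ ≤ -(ρ * (2 * p)) := neg_le_neg (mul_le_mul_of_nonneg_left amgm hρ)
    _ = accessUtility lam C ρ p p := by
        rw [accessUtility, h]; field_simp; ring

theorem stmt_8_general (lam Cb ρ : ℝ) (hρ : 0 < ρ)
    (h1 : Real.exp 1 * lam * Cb ≤ Real.sqrt ρ) (h2 : 1 ≤ lam * Cb) :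
    (∃ p ∈ Set.Ioc (0:ℝ) (1 / (lam * Cb)),
      p * Real.sqrt ρ = Real.exp (p * lam * Cb)) ∧
    (∀ p ∈ Set.Ioc (0:ℝ) 1, p * Real.sqrt ρ = Real.exp (p * lam * Cb) →
      ∀ q ∈ Set.Ioc (0:ℝ) 1,
        -Real.exp (p * lam * (2 * Cb)) / q - ρ * q ≤
          -Real.exp (p * lam * (2 * Cb)) / p - ρ * p) := by
  constructor
  · simpa only [mul_assoc] using
      exists_mem_Ioc_mul_eq_exp (one_pos.trans_le h2) (by rwa [← mul_assoc])
  · intro p hp hfix q hq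
    have hsq : exp (p * lam * (2 * Cb)) = ρ * p ^ 2 := by
      rw [← exp_two_mul_eq_mul_sq hρ.le hfix]
      ring_nf
    exact accessUtility_le_self hρ.le hp.1 hq.1 hsq

/-- In the delay-based medium access game with utility
`U(p′,p) = −exp(pλC)/p′ − ρp′` (where `C = 2C̄`), if `eλC̄ ≤ √ρ` and
`λC̄ ≥ 1`, then there exists `p ∈ (0, 1/(λC̄)]` with `p√ρ = exp(pλC̄)`,
and any `p ∈ (0,1]` satisfying `p√ρ = exp(pλC̄)` is a symmetric Nash
equilibrium. -/
theorem stmt_8 (lam Cb ρ : ℝ) (hlam : 0 < lam) (hCb : 0 < Cb) (hρ : 0 < ρ)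
    (h1 : Real.exp 1 * lam * Cb ≤ Real.sqrt ρ) (h2 : 1 ≤ lam * Cb) :
    (∃ p ∈ Set.Ioc (0:ℝ) (1 / (lam * Cb)),
      p * Real.sqrt ρ = Real.exp (p * lam * Cb)) ∧
    (∀ p ∈ Set.Ioc (0:ℝ) 1, p * Real.sqrt ρ = Real.exp (p * lam * Cb) →
      ∀ q ∈ Set.Ioc (0:ℝ) 1,
        -Real.exp (p * lam * (2 * Cb)) / q - ρ * q ≤
          -Real.exp (p * lam * (2 * Cb)) / p - ρ * p) :=
  stmt_8_general lam Cb ρ hρ h1 h2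
end

section
/- Fix λ > 0 and C̄ > 0 with λC̄ < 1. Then there exists ρ₀ ≥ (eλC̄)² such that: (i) for every ρ with (eλC̄)² ≤ ρ ≤ ρ₀, p* = 1 is a symmetric Nash equilibrium of the delay-based medium access game; and (ii) for every ρ ≥ ρ₀, the equation p√ρ = exp(pλC̄) has exactly one solution p ∈ (0,1], this solution satisfies p ≤ 1/(λC̄), and it is the unique symmetric Nash equilibrium. -/
/-!
With `a = λC̄`, the cost created by MAP `p` is `exp (2ap) = exp (ap) ^ 2`. Against a cost `E`,
the payoff `-E / q - ρ q` is maximized on `(0, 1]` at `min 1 √(E / ρ)`, so `p` is a symmetric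
equilibrium exactly when `ρ p² = exp (ap) ^ 2`, i.e. `p √ρ = exp (ap)`, or `p = 1` and
`ρ ≤ exp (2a)`. Take `ρ₀ = exp (2a)`, which dominates `(e a)²` since `e a ≤ exp a`. For
`ρ ≥ ρ₀` the equation `p √ρ = exp (ap)` reads `p exp (-ap) = 1 / √ρ`; the left side increases on
`[0, 1/a] ⊇ [0, 1]` from `0` to `exp (-a) ≥ 1 / √ρ`, so it has exactly one root in `(0, 1]`.
-/

open Real Set

/-- `E` stands for the cost `exp (p λ C)` imposed by the other nodes' MAP `p`, so `p` is a
symmetric Nash equilibrium iff `IsBestResponse ρ (exp (p λ C)) p`. -/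
def IsBestResponse (ρ E p : ℝ) : Prop :=
  ∀ q ∈ Ioc (0 : ℝ) 1, -E / q - ρ * q ≤ -E / p - ρ * p

section BestResponse

variable {ρ E p : ℝ}

theorem isBestResponse_iff (hp : 0 < p) :
    IsBestResponse ρ E p ↔ ∀ q ∈ Ioc (0 : ℝ) 1, 0 ≤ (q - p) * (ρ * q * p - E) := by
  refine forall₂_congr fun q hq => ?_
  have hdiff : (-E / p - ρ * p) - (-E / q - ρ * q) = (q - p) * (ρ * q * p - E) / (q * p) := by
    field_simp [hq.1.ne', hp.ne']
    ring
  rw [← sub_nonneg, hdiff, le_div_iff₀ (mul_pos hq.1 hp), zero_mul]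

theorem isBestResponse_of_mul_sq_eq (hρ : 0 ≤ ρ) (hp : 0 < p) (hE : ρ * p ^ 2 = E) :
    IsBestResponse ρ E p := by
  refine (isBestResponse_iff hp).2 fun q _ => ?_
  have hsq : (q - p) * (ρ * q * p - E) = ρ * p * (q - p) ^ 2 := by
    rw [← hE]
    ring
  rw [hsq]
  positivity

theorem isBestResponse_one (hρ : 0 ≤ ρ) (hE : ρ ≤ E) : IsBestResponse ρ E 1 :=
  (isBestResponse_iff one_pos).2 fun q ⟨_, hq1⟩ =>
    mul_nonneg_of_nonpos_of_nonpos (by linarith) (by nlinarith)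

theorem IsBestResponse.mul_sq_le (h : IsBestResponse ρ E p) (hρ : 0 < ρ) (hp : p ∈ Ioc 0 1) :
    ρ * p ^ 2 ≤ E := by
  by_contra! hlt
  have hρp : 0 < ρ * p := mul_pos hρ hp.1
  have hEp : E / (ρ * p) < p := by
    rw [div_lt_iff₀ hρp]
    linarith
  obtain ⟨q, hq, hqp⟩ := exists_between (max_lt hEp hp.1)
  rw [max_lt_iff, div_lt_iff₀ hρp] at hq
  have := (isBestResponse_iff hp.1).1 h q ⟨hq.2, hqp.le.trans hp.2⟩
  nlinarith [mul_pos (sub_pos.2 hqp) (sub_pos.2 hq.1)]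

theorem IsBestResponse.mul_sq_eq_of_lt_one (h : IsBestResponse ρ E p) (hρ : 0 < ρ)
    (hp : 0 < p) (hp1 : p < 1) : ρ * p ^ 2 = E := by
  refine le_antisymm (h.mul_sq_le hρ ⟨hp, hp1.le⟩) (not_lt.1 fun hlt => ?_)
  have hρp : 0 < ρ * p := mul_pos hρ hp
  have hEp : p < E / (ρ * p) := by
    rw [lt_div_iff₀ hρp]
    linarith
  obtain ⟨q, hpq, hq⟩ := exists_between (lt_min hp1 hEp)
  rw [lt_min_iff, lt_div_iff₀ hρp] at hq
  have := (isBestResponse_iff hp).1 h q ⟨hp.trans hpq, hq.1.le⟩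
  nlinarith [mul_pos (sub_pos.2 hpq) (sub_pos.2 hq.2)]

end BestResponse

theorem isBestResponse_exp_sq_iff {a ρ p : ℝ} (hρ : exp a ^ 2 ≤ ρ) (hp : p ∈ Ioc 0 1) :
    IsBestResponse ρ (exp (a * p) ^ 2) p ↔ p * √ρ = exp (a * p) := by
  have hρ0 : 0 < ρ := (by positivity : 0 < exp a ^ 2).trans_le hρ
  have hsq : p * √ρ = exp (a * p) ↔ ρ * p ^ 2 = exp (a * p) ^ 2 := by
    rw [← sq_eq_sq₀ (mul_nonneg hp.1.le (sqrt_nonneg ρ)) (exp_pos _).le, mul_pow,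
      sq_sqrt hρ0.le, mul_comm]
  rw [hsq]
  refine ⟨fun h => ?_, isBestResponse_of_mul_sq_eq hρ0.le hp.1⟩
  rcases hp.2.lt_or_eq with hp1 | rfl
  · exact h.mul_sq_eq_of_lt_one hρ0 hp.1 hp1
  · exact le_antisymm (h.mul_sq_le hρ0 hp) (by simpa using hρ)

theorem strictMonoOn_mul_exp_neg_mul {a : ℝ} (ha : 0 < a) :
    StrictMonoOn (fun x => x * exp (-(a * x))) (Iic a⁻¹) := by
  refine strictMonoOn_of_deriv_pos (convex_Iic _) (by fun_prop) fun x hx => ?_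
  rw [interior_Iic, mem_Iio] at hx
  have hax : a * x < 1 := by simpa [ha.ne'] using mul_lt_mul_of_pos_left hx ha
  have hlin : HasDerivAt (fun x => -(a * x)) (-a) x := by
    simpa using ((hasDerivAt_id' x).const_mul a).fun_neg
  have hd : HasDerivAt (fun x => x * exp (-(a * x))) (exp (-(a * x)) * (1 - a * x)) x :=
    ((hasDerivAt_id' x).fun_mul hlin.exp).congr_deriv (by ring)
  rw [hd.deriv]
  exact mul_pos (exp_pos _) (sub_pos.2 hax)

theorem existsUnique_mul_eq_exp {a s : ℝ} (ha : 0 < a) (ha1 : a ≤ 1) (hs : exp a ≤ s) :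
    ∃! p, p ∈ Ioc (0 : ℝ) 1 ∧ p * s = exp (a * p) := by
  set g : ℝ → ℝ := fun x => x * exp (-(a * x))
  have hs0 : 0 < s := (exp_pos a).trans_le hs
  have hg : ∀ p, p * s = exp (a * p) ↔ g p = s⁻¹ := fun p => by
    simp only [g, exp_neg]
    constructor <;> intro h <;> field_simp at h ⊢ <;> linarith
  have hmono : StrictMonoOn g (Icc 0 1) :=
    (strictMonoOn_mul_exp_neg_mul ha).mono fun x hx => hx.2.trans ((one_le_inv₀ ha).2 ha1)
  have hmem : s⁻¹ ∈ Icc (g 0) (g 1) := by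
    simp only [g, zero_mul, one_mul, mul_one, exp_neg]
    exact ⟨inv_nonneg.2 hs0.le, inv_anti₀ (exp_pos a) hs⟩
  obtain ⟨p, hp, hgp⟩ := intermediate_value_Icc zero_le_one (by fun_prop) hmem
  have hp0 : p ≠ 0 := by
    rintro rfl
    simp only [g, zero_mul, zero_eq_inv] at hgp
    exact hs0.ne' hgp.symm
  refine ⟨p, ⟨⟨hp.1.lt_of_ne' hp0, hp.2⟩, (hg p).2 hgp⟩, fun q ⟨hq, hqs⟩ => ?_⟩
  exact hmono.injOn ⟨hq.1.le, hq.2⟩ hp (((hg q).1 hqs).trans hgp.symm)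

/-- If `λC̄ < 1`, there exists `ρ₀ ≥ (eλC̄)²` such that:
(i) for every `ρ` with `(eλC̄)² ≤ ρ ≤ ρ₀`, `p* = 1` is a symmetric Nash
equilibrium of the delay-based game with utility
`U(p′,p) = −exp(pλC)/p′ − ρp′` (`C = 2C̄`); and (ii) for every `ρ ≥ ρ₀`,
the equation `p√ρ = exp(pλC̄)` has exactly one solution `p ∈ (0,1]`, this
solution satisfies `p ≤ 1/(λC̄)`, and it is the unique symmetric Nash
equilibrium. -/
theorem stmt_11 (lam Cb : ℝ) (hlam : 0 < lam) (hCb : 0 < Cb)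
    (h : lam * Cb < 1) :
    ∃ ρ0 : ℝ, (Real.exp 1 * lam * Cb) ^ 2 ≤ ρ0 ∧
      (∀ ρ : ℝ, (Real.exp 1 * lam * Cb) ^ 2 ≤ ρ → ρ ≤ ρ0 →
        ∀ q ∈ Set.Ioc (0:ℝ) 1,
          -Real.exp ((1:ℝ) * lam * (2 * Cb)) / q - ρ * q ≤
            -Real.exp ((1:ℝ) * lam * (2 * Cb)) / 1 - ρ * 1) ∧
      (∀ ρ : ℝ, ρ0 ≤ ρ →
        ∃ p ∈ Set.Ioc (0:ℝ) 1,
          p * Real.sqrt ρ = Real.exp (p * lam * Cb) ∧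
          p ≤ 1 / (lam * Cb) ∧
          (∀ q ∈ Set.Ioc (0:ℝ) 1,
            q * Real.sqrt ρ = Real.exp (q * lam * Cb) → q = p) ∧
          (∀ q ∈ Set.Ioc (0:ℝ) 1,
            -Real.exp (p * lam * (2 * Cb)) / q - ρ * q ≤
              -Real.exp (p * lam * (2 * Cb)) / p - ρ * p) ∧
          (∀ p' ∈ Set.Ioc (0:ℝ) 1,
            (∀ q ∈ Set.Ioc (0:ℝ) 1,
              -Real.exp (p' * lam * (2 * Cb)) / q - ρ * q ≤
                -Real.exp (p' * lam * (2 * Cb)) / p' - ρ * p') → p' = p)) := by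
  have ha : 0 < lam * Cb := mul_pos hlam hCb
  have hrate : ∀ x, x * lam * Cb = lam * Cb * x := fun x => by ring
  have hcost : ∀ x, exp (x * lam * (2 * Cb)) = exp (lam * Cb * x) ^ 2 := fun x => by
    rw [sq, ← exp_add]
    ring_nf
  refine ⟨exp (lam * Cb) ^ 2, ?_, fun ρ hρ hρle => ?_, fun ρ hρ => ?_⟩
  · rw [mul_assoc]
    exact pow_le_pow_left₀ (by positivity) exp_one_mul_le_exp 2
  · rw [hcost, mul_one]
    exact isBestResponse_one ((sq_nonneg _).trans hρ) hρle
  have hsqrt : exp (lam * Cb) ≤ √ρ :=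
    (le_sqrt (exp_pos _).le ((sq_nonneg _).trans hρ)).2 hρ
  have hsne : ∀ p ∈ Ioc (0 : ℝ) 1, IsBestResponse ρ (exp (p * lam * (2 * Cb))) p ↔
      p * √ρ = exp (p * lam * Cb) := fun p hp => by
    rw [hcost, hrate]
    exact isBestResponse_exp_sq_iff hρ hp
  obtain ⟨p, ⟨hp, hpeq⟩, huniq⟩ := existsUnique_mul_eq_exp ha h.le hsqrt
  rw [← hrate] at hpeq
  have hsol : ∀ q ∈ Ioc (0 : ℝ) 1, q * √ρ = exp (q * lam * Cb) → q = p := fun q hq hqeq =>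
    huniq q ⟨hq, hrate q ▸ hqeq⟩
  exact ⟨p, hp, hpeq, hp.2.trans (one_le_one_div ha h.le), hsol, (hsne p hp).2 hpeq,
    fun p' hp' hbest => hsol p' hp' ((hsne p' hp').1 hbest)⟩
end

section
/- Fix λ > 0 and C̄ > 0. For every ρ ≥ (eλC̄)² the equation p√ρ = exp(pλC̄) has a least positive solution q(ρ), and q(ρ) ≤ 1/(λC̄); the function ρ ↦ ρ q(ρ) on [(eλC̄)², ∞) is quasiconvex (nonincreasing on [(eλC̄)², 4e(λC̄)²] and nondecreasing on [4e(λC̄)², ∞)) and attains its global minimum eλC̄·2 = 2eλC̄ at ρ* = 4e(λC̄)², where q(ρ*) = 1/(2λC̄). Moreover, for every ρ ≥ (eλC̄)² the equation also has a greatest solution Q(ρ) ≥ 1/(λC̄), the function ρ ↦ ρ Q(ρ) is nondecreasing on [(eλC̄)², ∞), and ρ Q(ρ) = e²λC̄ at ρ = (eλC̄)². -/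
/-!
Substituting `t = λC̄ p` turns the equation into `exp t / t = √ρ / (λC̄)`. The function
`t ↦ exp t / t` decreases on `(0, 1]`, increases on `[1, ∞)` and takes the value `e` at `1`,
so for `√ρ / (λC̄) ≥ e` the least and greatest solutions come from its two monotone branches.
Moreover, at a solution `ρ p = λC̄ · exp (2t) / t = 2 λC̄ · exp (2t) / (2t)`, so the potential
delay is again `exp s / s` evaluated at `s = 2t`; its monotonicity in `ρ` is read off from
the branch that `2t` lies on, and its minimum `2eλC̄` is attained when `2t = 1`.
-/

open Real Set Function

section InvFunOn

variable {α β : Type*} [LinearOrder α] [Preorder β] [Nonempty α] {f : α → β} {s : Set α}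
  {t : Set β}

theorem StrictMonoOn.monotoneOn_invFunOn (hf : StrictMonoOn f s) (hst : SurjOn f s t) :
    MonotoneOn (invFunOn f s) t := by
  intro x hx y hy hxy
  rwa [← hf.le_iff_le (hst.mapsTo_invFunOn hx) (hst.mapsTo_invFunOn hy),
    hst.rightInvOn_invFunOn hx, hst.rightInvOn_invFunOn hy]

theorem StrictAntiOn.antitoneOn_invFunOn (hf : StrictAntiOn f s) (hst : SurjOn f s t) :
    AntitoneOn (invFunOn f s) t := by
  intro x hx y hy hxy
  rwa [← hf.le_iff_ge (hst.mapsTo_invFunOn hx) (hst.mapsTo_invFunOn hy),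
    hst.rightInvOn_invFunOn hx, hst.rightInvOn_invFunOn hy]

end InvFunOn

namespace MediumAccess

noncomputable section

def expDiv (t : ℝ) : ℝ := exp t / t

theorem expDiv_one : expDiv 1 = exp 1 := div_one _

theorem expDiv_half : expDiv (1 / 2) = 2 * exp (1 / 2) := by
  rw [expDiv, div_div_eq_mul_div, div_one, mul_comm]

theorem hasDerivAt_expDiv {t : ℝ} (ht : t ≠ 0) :
    HasDerivAt expDiv (exp t * (t - 1) / t ^ 2) t :=
  ((hasDerivAt_exp t).div (hasDerivAt_id t) ht).congr_deriv (by rw [id]; ring)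

theorem continuousOn_expDiv : ContinuousOn expDiv (Ioi 0) :=
  continuousOn_exp.div continuousOn_id fun _ ht => ht.ne'

theorem strictAntiOn_expDiv : StrictAntiOn expDiv (Ioc 0 1) := by
  refine strictAntiOn_of_deriv_neg (convex_Ioc 0 1)
    (continuousOn_expDiv.mono Ioc_subset_Ioi_self) fun t ht => ?_
  rw [interior_Ioc] at ht
  rw [(hasDerivAt_expDiv ht.1.ne').deriv]
  have : exp t * (t - 1) < 0 := mul_neg_of_pos_of_neg (exp_pos t) (by linarith [ht.2])
  exact div_neg_of_neg_of_pos this (pow_pos ht.1 2)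

theorem strictMonoOn_expDiv : StrictMonoOn expDiv (Ici 1) := by
  refine strictMonoOn_of_deriv_pos (convex_Ici 1)
    (continuousOn_expDiv.mono fun t (ht : 1 ≤ t) => zero_lt_one.trans_le ht) fun t ht => ?_
  rw [interior_Ici, mem_Ioi] at ht
  rw [(hasDerivAt_expDiv (by linarith)).deriv]
  have : 0 < exp t * (t - 1) := mul_pos (exp_pos t) (by linarith)
  exact div_pos this (by positivity)

theorem exp_one_le_expDiv {t : ℝ} (ht : 0 < t) : exp 1 ≤ expDiv t := by
  rw [← expDiv_one]
  rcases le_total t 1 with h | h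
  · exact strictAntiOn_expDiv.antitoneOn ⟨ht, h⟩ ⟨one_pos, le_rfl⟩ h
  · exact strictMonoOn_expDiv.monotoneOn self_mem_Ici h h

theorem surjOn_expDiv_Ioc : SurjOn expDiv (Ioc 0 1) (Ici (exp 1)) := by
  intro x (hx : exp 1 ≤ x)
  have hx0 : 0 < x := (exp_pos 1).trans_le hx
  have hx1 : 1 ≤ x := (one_le_exp zero_le_one).trans hx
  have hle : 1 / x ≤ 1 := by rwa [div_le_one hx0]
  -- `expDiv (1 / x) = x * exp (1 / x) ≥ x`
  have hmem : x ∈ Icc (expDiv 1) (expDiv (1 / x)) := by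
    refine ⟨by rwa [expDiv_one], ?_⟩
    rw [expDiv, div_div_eq_mul_div, div_one]
    exact le_mul_of_one_le_left hx0.le (one_le_exp (by positivity))
  obtain ⟨t, ht, rfl⟩ := intermediate_value_Icc' hle
    (continuousOn_expDiv.mono fun t ht => (one_div_pos.2 hx0).trans_le ht.1) hmem
  exact ⟨t, ⟨(one_div_pos.2 hx0).trans_le ht.1, ht.2⟩, rfl⟩

theorem surjOn_expDiv_Ici : SurjOn expDiv (Ici 1) (Ici (exp 1)) := by
  intro x (hx : exp 1 ≤ x)
  have htendsto : Filter.Tendsto expDiv Filter.atTop Filter.atTop :=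
    (tendsto_exp_div_pow_atTop 1).congr fun t => by rw [pow_one, expDiv]
  obtain ⟨T, hT⟩ := Filter.eventually_atTop.1 (htendsto.eventually_ge_atTop x)
  have hT1 : 1 ≤ max T 1 := le_max_right T 1
  obtain ⟨t, ht, rfl⟩ := intermediate_value_Icc hT1
    (continuousOn_expDiv.mono fun t ht => zero_lt_one.trans_le ht.1)
    ⟨by rwa [expDiv_one], hT _ (le_max_left T 1)⟩
  exact ⟨t, ht.1, rfl⟩

def lowerBranch (x : ℝ) : ℝ := invFunOn expDiv (Ioc 0 1) x

def upperBranch (x : ℝ) : ℝ := invFunOn expDiv (Ici 1) x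

variable {x t : ℝ}

theorem lowerBranch_mem (hx : exp 1 ≤ x) : lowerBranch x ∈ Ioc 0 1 :=
  surjOn_expDiv_Ioc.mapsTo_invFunOn hx

theorem upperBranch_mem (hx : exp 1 ≤ x) : 1 ≤ upperBranch x :=
  surjOn_expDiv_Ici.mapsTo_invFunOn hx

theorem expDiv_lowerBranch (hx : exp 1 ≤ x) : expDiv (lowerBranch x) = x :=
  surjOn_expDiv_Ioc.rightInvOn_invFunOn hx

theorem expDiv_upperBranch (hx : exp 1 ≤ x) : expDiv (upperBranch x) = x :=
  surjOn_expDiv_Ici.rightInvOn_invFunOn hx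

theorem lowerBranch_expDiv (ht : t ∈ Ioc 0 1) : lowerBranch (expDiv t) = t :=
  strictAntiOn_expDiv.injOn.leftInvOn_invFunOn ht

theorem upperBranch_expDiv (ht : 1 ≤ t) : upperBranch (expDiv t) = t :=
  strictMonoOn_expDiv.injOn.leftInvOn_invFunOn ht

theorem antitoneOn_lowerBranch : AntitoneOn lowerBranch (Ici (exp 1)) :=
  strictAntiOn_expDiv.antitoneOn_invFunOn surjOn_expDiv_Ioc

theorem monotoneOn_upperBranch : MonotoneOn upperBranch (Ici (exp 1)) :=
  strictMonoOn_expDiv.monotoneOn_invFunOn surjOn_expDiv_Ici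

theorem lowerBranch_expDiv_le (ht : 0 < t) : lowerBranch (expDiv t) ≤ t := by
  rcases le_or_gt t 1 with h | h
  · exact (lowerBranch_expDiv ⟨ht, h⟩).le
  · exact (lowerBranch_mem (exp_one_le_expDiv ht)).2.trans h.le

theorem le_upperBranch_expDiv (ht : 0 < t) : t ≤ upperBranch (expDiv t) := by
  rcases le_or_gt 1 t with h | h
  · exact (upperBranch_expDiv h).ge
  · exact h.le.trans (upperBranch_mem (exp_one_le_expDiv ht))

theorem expDiv_sq_mul (ht : t ≠ 0) : expDiv t ^ 2 * t = 2 * expDiv (2 * t) := by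
  simp only [expDiv]
  rw [show 2 * t = t + t by ring, exp_add]
  field_simp
  ring

theorem one_le_two_mul_lowerBranch (hx : exp 1 ≤ x) (hx' : x ≤ expDiv (1 / 2)) :
    1 ≤ 2 * lowerBranch x := by
  have hhalf : exp 1 ≤ expDiv (1 / 2) := exp_one_le_expDiv one_half_pos
  have := antitoneOn_lowerBranch hx hhalf hx'
  rw [lowerBranch_expDiv ⟨one_half_pos, one_half_lt_one.le⟩] at this
  linarith

theorem two_mul_lowerBranch_le_one (hx' : expDiv (1 / 2) ≤ x) : 2 * lowerBranch x ≤ 1 := by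
  have hhalf : exp 1 ≤ expDiv (1 / 2) := exp_one_le_expDiv one_half_pos
  have := antitoneOn_lowerBranch hhalf (hhalf.trans hx') hx'
  rw [lowerBranch_expDiv ⟨one_half_pos, one_half_lt_one.le⟩] at this
  linarith

def solutionSet (a ρ : ℝ) : Set ℝ := {p | 0 < p ∧ p * √ρ = exp (p * a)}

def leastSol (a ρ : ℝ) : ℝ := lowerBranch (√ρ / a) / a

def greatestSol (a ρ : ℝ) : ℝ := upperBranch (√ρ / a) / a

variable {a c ρ ρ₁ ρ₂ p : ℝ}

theorem mem_solutionSet_iff (ha : 0 < a) :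
    p ∈ solutionSet a ρ ↔ 0 < p ∧ expDiv (a * p) = √ρ / a := by
  refine and_congr_right fun hp => ?_
  rw [expDiv, div_eq_div_iff (by positivity) ha.ne', mul_comm a p]
  constructor
  · intro h
    rw [← h]
    ring
  · intro h
    refine mul_left_cancel₀ ha.ne' ?_
    linear_combination -h

theorem le_sqrt_div_iff (ha : 0 < a) (hc : 0 < c) : c ≤ √ρ / a ↔ (c * a) ^ 2 ≤ ρ := by
  rw [le_div_iff₀ ha, le_sqrt' (by positivity)]

theorem sqrt_div_le_iff (ha : 0 < a) (hc : 0 ≤ c) : √ρ / a ≤ c ↔ ρ ≤ (c * a) ^ 2 := by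
  rw [div_le_iff₀ ha, sqrt_le_left (by positivity)]

theorem sqrt_sq_mul_div (ha : 0 < a) (hc : 0 ≤ c) : √((c * a) ^ 2) / a = c := by
  rw [sqrt_sq (by positivity), mul_div_cancel_right₀ c ha.ne']

theorem four_mul_exp_one_mul_sq (a : ℝ) : 4 * exp 1 * a ^ 2 = (expDiv (1 / 2) * a) ^ 2 := by
  rw [expDiv_half, exp_half, mul_pow, mul_pow, sq_sqrt (exp_pos 1).le]
  ring

theorem sqrt_div_le_expDiv_half (ha : 0 < a) (hρ : ρ ≤ 4 * exp 1 * a ^ 2) :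
    √ρ / a ≤ expDiv (1 / 2) :=
  (sqrt_div_le_iff ha (by rw [expDiv_half]; positivity)).2
    (hρ.trans_eq (four_mul_exp_one_mul_sq a))

theorem expDiv_half_le_sqrt_div (ha : 0 < a) (hρ : 4 * exp 1 * a ^ 2 ≤ ρ) :
    expDiv (1 / 2) ≤ √ρ / a :=
  (le_sqrt_div_iff ha (by rw [expDiv_half]; positivity)).2
    ((four_mul_exp_one_mul_sq a).symm.trans_le hρ)

theorem mul_div_eq_of_expDiv_eq (ha : 0 < a) (hρ : 0 ≤ ρ) {t : ℝ} (ht : t ≠ 0)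
    (h : expDiv t = √ρ / a) : ρ * (t / a) = 2 * a * expDiv (2 * t) := by
  rw [mul_right_comm, ← expDiv_sq_mul ht, h]
  field_simp
  rw [sq_sqrt hρ]

theorem isLeast_leastSol (ha : 0 < a) (hρ : (exp 1 * a) ^ 2 ≤ ρ) :
    IsLeast (solutionSet a ρ) (leastSol a ρ) := by
  have hx := (le_sqrt_div_iff ha (exp_pos 1)).2 hρ
  refine ⟨(mem_solutionSet_iff ha).2 ⟨div_pos (lowerBranch_mem hx).1 ha, ?_⟩, fun p hp => ?_⟩
  · rw [leastSol, mul_div_cancel₀ _ ha.ne', expDiv_lowerBranch hx]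
  · obtain ⟨hp, hpx⟩ := (mem_solutionSet_iff ha).1 hp
    rw [leastSol, div_le_iff₀' ha, ← hpx]
    exact lowerBranch_expDiv_le (mul_pos ha hp)

theorem isGreatest_greatestSol (ha : 0 < a) (hρ : (exp 1 * a) ^ 2 ≤ ρ) :
    IsGreatest (solutionSet a ρ) (greatestSol a ρ) := by
  have hx := (le_sqrt_div_iff ha (exp_pos 1)).2 hρ
  have ht := zero_lt_one.trans_le (upperBranch_mem hx)
  refine ⟨(mem_solutionSet_iff ha).2 ⟨div_pos ht ha, ?_⟩, fun p hp => ?_⟩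
  · rw [greatestSol, mul_div_cancel₀ _ ha.ne', expDiv_upperBranch hx]
  · obtain ⟨hp, hpx⟩ := (mem_solutionSet_iff ha).1 hp
    rw [greatestSol, le_div_iff₀' ha, ← hpx]
    exact le_upperBranch_expDiv (mul_pos ha hp)

theorem leastSol_le_one_div (ha : 0 < a) (hρ : (exp 1 * a) ^ 2 ≤ ρ) : leastSol a ρ ≤ 1 / a :=
  div_le_div_of_nonneg_right (lowerBranch_mem ((le_sqrt_div_iff ha (exp_pos 1)).2 hρ)).2 ha.le

theorem one_div_le_greatestSol (ha : 0 < a) (hρ : (exp 1 * a) ^ 2 ≤ ρ) :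
    1 / a ≤ greatestSol a ρ :=
  div_le_div_of_nonneg_right (upperBranch_mem ((le_sqrt_div_iff ha (exp_pos 1)).2 hρ)) ha.le

theorem mul_leastSol (ha : 0 < a) (hρ : (exp 1 * a) ^ 2 ≤ ρ) :
    ρ * leastSol a ρ = 2 * a * expDiv (2 * lowerBranch (√ρ / a)) := by
  have hx := (le_sqrt_div_iff ha (exp_pos 1)).2 hρ
  exact mul_div_eq_of_expDiv_eq ha ((sq_nonneg _).trans hρ) (lowerBranch_mem hx).1.ne'
    (expDiv_lowerBranch hx)

theorem mul_greatestSol (ha : 0 < a) (hρ : (exp 1 * a) ^ 2 ≤ ρ) :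
    ρ * greatestSol a ρ = 2 * a * expDiv (2 * upperBranch (√ρ / a)) := by
  have hx := (le_sqrt_div_iff ha (exp_pos 1)).2 hρ
  exact mul_div_eq_of_expDiv_eq ha ((sq_nonneg _).trans hρ)
    (zero_lt_one.trans_le (upperBranch_mem hx)).ne' (expDiv_upperBranch hx)

theorem lowerBranch_sqrt_div_le_of_le (ha : 0 < a) (h₁ : (exp 1 * a) ^ 2 ≤ ρ₁) (h : ρ₁ ≤ ρ₂) :
    lowerBranch (√ρ₂ / a) ≤ lowerBranch (√ρ₁ / a) :=
  have hx₁ := (le_sqrt_div_iff ha (exp_pos 1)).2 h₁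
  have hx : √ρ₁ / a ≤ √ρ₂ / a := div_le_div_of_nonneg_right (sqrt_le_sqrt h) ha.le
  antitoneOn_lowerBranch hx₁ (hx₁.trans hx) hx

theorem upperBranch_sqrt_div_le_of_le (ha : 0 < a) (h₁ : (exp 1 * a) ^ 2 ≤ ρ₁) (h : ρ₁ ≤ ρ₂) :
    upperBranch (√ρ₁ / a) ≤ upperBranch (√ρ₂ / a) :=
  have hx₁ := (le_sqrt_div_iff ha (exp_pos 1)).2 h₁
  have hx : √ρ₁ / a ≤ √ρ₂ / a := div_le_div_of_nonneg_right (sqrt_le_sqrt h) ha.le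
  monotoneOn_upperBranch hx₁ (hx₁.trans hx) hx

theorem antitoneOn_mul_leastSol (ha : 0 < a) :
    AntitoneOn (fun ρ => ρ * leastSol a ρ) (Icc ((exp 1 * a) ^ 2) (4 * exp 1 * a ^ 2)) := by
  have hlow : ∀ ρ ∈ Icc ((exp 1 * a) ^ 2) (4 * exp 1 * a ^ 2), 1 ≤ 2 * lowerBranch (√ρ / a) :=
    fun ρ hρ => one_le_two_mul_lowerBranch ((le_sqrt_div_iff ha (exp_pos 1)).2 hρ.1)
      (sqrt_div_le_expDiv_half ha hρ.2)
  intro ρ₁ h₁ ρ₂ h₂ h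
  simp only [mul_leastSol ha h₁.1, mul_leastSol ha h₂.1]
  gcongr 2 * a * ?_
  exact strictMonoOn_expDiv.monotoneOn (hlow ρ₂ h₂) (hlow ρ₁ h₁)
    (by gcongr; exact lowerBranch_sqrt_div_le_of_le ha h₁.1 h)

theorem monotoneOn_mul_leastSol (ha : 0 < a) :
    MonotoneOn (fun ρ => ρ * leastSol a ρ) (Ici (4 * exp 1 * a ^ 2)) := by
  have hρ₀ : (exp 1 * a) ^ 2 ≤ 4 * exp 1 * a ^ 2 := by
    rw [four_mul_exp_one_mul_sq]
    gcongr
    exact exp_one_le_expDiv one_half_pos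
  have hlow : ∀ ρ ∈ Ici (4 * exp 1 * a ^ 2), 2 * lowerBranch (√ρ / a) ∈ Ioc 0 1 := fun ρ hρ =>
    have hx := (le_sqrt_div_iff ha (exp_pos 1)).2 (hρ₀.trans hρ)
    ⟨mul_pos two_pos (lowerBranch_mem hx).1,
      two_mul_lowerBranch_le_one (expDiv_half_le_sqrt_div ha hρ)⟩
  intro ρ₁ h₁ ρ₂ h₂ h
  simp only [mul_leastSol ha (hρ₀.trans h₁), mul_leastSol ha (hρ₀.trans h₂)]
  gcongr 2 * a * ?_
  exact strictAntiOn_expDiv.antitoneOn (hlow ρ₂ h₂) (hlow ρ₁ h₁)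
    (by gcongr; exact lowerBranch_sqrt_div_le_of_le ha (hρ₀.trans h₁) h)

theorem two_mul_exp_one_mul_le_mul_leastSol (ha : 0 < a) (hρ : (exp 1 * a) ^ 2 ≤ ρ) :
    2 * exp 1 * a ≤ ρ * leastSol a ρ := by
  have hx := (le_sqrt_div_iff ha (exp_pos 1)).2 hρ
  rw [mul_leastSol ha hρ, mul_right_comm]
  gcongr
  exact exp_one_le_expDiv (mul_pos two_pos (lowerBranch_mem hx).1)

theorem leastSol_four_mul_exp_one_mul_sq (ha : 0 < a) :
    leastSol a (4 * exp 1 * a ^ 2) = 1 / (2 * a) := by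
  rw [leastSol, four_mul_exp_one_mul_sq, sqrt_sq_mul_div ha (by rw [expDiv_half]; positivity),
    lowerBranch_expDiv ⟨one_half_pos, one_half_lt_one.le⟩]
  field_simp

theorem monotoneOn_mul_greatestSol (ha : 0 < a) :
    MonotoneOn (fun ρ => ρ * greatestSol a ρ) (Ici ((exp 1 * a) ^ 2)) := by
  have hup : ∀ ρ ∈ Ici ((exp 1 * a) ^ 2), 2 * upperBranch (√ρ / a) ∈ Ici 1 := fun ρ hρ => by
    have := upperBranch_mem ((le_sqrt_div_iff ha (exp_pos 1)).2 hρ)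
    rw [mem_Ici]
    linarith
  intro ρ₁ h₁ ρ₂ h₂ h
  simp only [mul_greatestSol ha h₁, mul_greatestSol ha h₂]
  gcongr 2 * a * ?_
  exact strictMonoOn_expDiv.monotoneOn (hup ρ₁ h₁) (hup ρ₂ h₂)
    (by gcongr; exact upperBranch_sqrt_div_le_of_le ha h₁ h)

theorem greatestSol_sq_exp_one_mul (ha : 0 < a) : greatestSol a ((exp 1 * a) ^ 2) = 1 / a := by
  rw [greatestSol, sqrt_sq_mul_div ha (exp_pos 1).le, ← expDiv_one, upperBranch_expDiv le_rfl]

end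

end MediumAccess

open MediumAccess in
/-- For `λ > 0`, `C̄ > 0`: for every `ρ ≥ (eλC̄)²` the equation
`p√ρ = exp(pλC̄)` has a least positive solution `q(ρ) ≤ 1/(λC̄)` and a
greatest solution `Q(ρ) ≥ 1/(λC̄)`; `ρ ↦ ρ q(ρ)` is quasiconvex
(nonincreasing on `[(eλC̄)², 4e(λC̄)²]`, nondecreasing on `[4e(λC̄)², ∞)`)
with global minimum `2eλC̄` attained at `ρ* = 4e(λC̄)²`, where
`q(ρ*) = 1/(2λC̄)`; `ρ ↦ ρ Q(ρ)` is nondecreasing on `[(eλC̄)², ∞)` and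
`ρ Q(ρ) = e²λC̄` at `ρ = (eλC̄)²`. -/
theorem stmt_13 (lam Cb : ℝ) (hlam : 0 < lam) (hCb : 0 < Cb) :
    ∃ q Q : ℝ → ℝ,
      (∀ ρ : ℝ, (Real.exp 1 * lam * Cb) ^ 2 ≤ ρ →
        IsLeast {p : ℝ | 0 < p ∧ p * Real.sqrt ρ = Real.exp (p * lam * Cb)}
          (q ρ) ∧
        q ρ ≤ 1 / (lam * Cb) ∧
        IsGreatest {p : ℝ | 0 < p ∧ p * Real.sqrt ρ = Real.exp (p * lam * Cb)}
          (Q ρ) ∧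
        1 / (lam * Cb) ≤ Q ρ) ∧
      AntitoneOn (fun ρ => ρ * q ρ)
        (Set.Icc ((Real.exp 1 * lam * Cb) ^ 2)
          (4 * Real.exp 1 * (lam * Cb) ^ 2)) ∧
      MonotoneOn (fun ρ => ρ * q ρ)
        (Set.Ici (4 * Real.exp 1 * (lam * Cb) ^ 2)) ∧
      (∀ ρ : ℝ, (Real.exp 1 * lam * Cb) ^ 2 ≤ ρ →
        2 * Real.exp 1 * lam * Cb ≤ ρ * q ρ) ∧
      (4 * Real.exp 1 * (lam * Cb) ^ 2) *
          q (4 * Real.exp 1 * (lam * Cb) ^ 2) = 2 * Real.exp 1 * lam * Cb ∧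
      q (4 * Real.exp 1 * (lam * Cb) ^ 2) = 1 / (2 * lam * Cb) ∧
      MonotoneOn (fun ρ => ρ * Q ρ)
        (Set.Ici ((Real.exp 1 * lam * Cb) ^ 2)) ∧
      (Real.exp 1 * lam * Cb) ^ 2 * Q ((Real.exp 1 * lam * Cb) ^ 2) =
        Real.exp 1 ^ 2 * lam * Cb := by
  have ha : 0 < lam * Cb := mul_pos hlam hCb
  have hset (ρ : ℝ) :
      {p : ℝ | 0 < p ∧ p * √ρ = exp (p * lam * Cb)} = solutionSet (lam * Cb) ρ := by
    simp only [solutionSet, mul_assoc]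
  simp only [hset, mul_assoc (exp 1), mul_assoc (2 * exp 1), mul_assoc 2 lam,
    mul_assoc (exp 1 ^ 2)]
  refine ⟨leastSol (lam * Cb), greatestSol (lam * Cb), fun ρ hρ =>
    ⟨isLeast_leastSol ha hρ, leastSol_le_one_div ha hρ, isGreatest_greatestSol ha hρ,
      one_div_le_greatestSol ha hρ⟩, antitoneOn_mul_leastSol ha, monotoneOn_mul_leastSol ha,
    fun ρ hρ => two_mul_exp_one_mul_le_mul_leastSol ha hρ, ?_, leastSol_four_mul_exp_one_mul_sq ha,
    monotoneOn_mul_greatestSol ha, ?_⟩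
  · rw [leastSol_four_mul_exp_one_mul_sq ha]
    field_simp
    norm_num
  · rw [greatestSol_sq_exp_one_mul ha]
    field_simp
end

section
/- Fix λ > 0, C̄ > 0 and write C = 2C̄. Consider the set S of pairs (ρ, p) with ρ > 0, p ∈ (0,1] and p√ρ = exp(pλC̄). The minimum of ρp over S equals eλC, attained at p = 1/(λC) and ρ = e(λC)², when λC > 1; and it equals exp(λC), attained at p = 1 and ρ = exp(λC), when λC ≤ 1. Consequently, the minimal spatial delay density at equilibrium, λ·(minimum of ρp over S), equals λ²eC if λC > 1 and λ exp(λC) if λC ≤ 1, which coincides with the global optimal spatial delay density min over p ∈ (0,1] of λ exp(pλC)/p. -/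
lemma key_rho (lam Cb ρ p : ℝ) (hp : 0 < p) (hρ : 0 < ρ)
    (h : p * Real.sqrt ρ = Real.exp (p * lam * Cb)) :
    ρ * p = Real.exp (p * (lam * (2 * Cb))) / p := by
  have h2 : (p * Real.sqrt ρ)^2 = Real.exp (p * lam * Cb)^2 := by rw [h]
  rw [mul_pow, Real.sq_sqrt hρ.le] at h2
  have he : Real.exp (p * lam * Cb)^2 = Real.exp (p * (lam * (2 * Cb))) := by
    rw [sq, ← Real.exp_add]; ring_nf
  rw [he] at h2
  field_simp
  rw [show p * lam * 2 * Cb = p * (lam * (2 * Cb)) by ring]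
  nlinarith [h2]

lemma exp_ge_e_mul (x : ℝ) : Real.exp 1 * x ≤ Real.exp x := by
  have h := Real.add_one_le_exp (x - 1)
  have : Real.exp x = Real.exp 1 * Real.exp (x - 1) := by
    rw [← Real.exp_add]; ring_nf
  nlinarith [Real.exp_pos 1]

lemma exp_ge_p_mul (p a : ℝ) (hp : 0 < p) (hp1 : p ≤ 1) (ha1 : a ≤ 1) (ha : 0 < a) :
    p * Real.exp a ≤ Real.exp (p * a) := by
  have h := Real.add_one_le_exp (p * a - a)
  have : Real.exp (p * a) = Real.exp a * Real.exp (p * a - a) := by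
    rw [← Real.exp_add]; ring_nf
  nlinarith [Real.exp_pos a, mul_nonneg (mul_nonneg (Real.exp_pos a).le (sub_nonneg.2 hp1)) (sub_nonneg.2 ha1)]

lemma sqrt_exp' (x : ℝ) : Real.sqrt (Real.exp x) = Real.exp (x / 2) := by
  rw [show x = x/2 + x/2 by ring, Real.exp_add, Real.sqrt_mul_self (Real.exp_pos _).le]
  ring_nf

/-- Let `S` be the set of pairs `(ρ, p)` with `ρ > 0`,
`p ∈ (0,1]` and `p√ρ = exp(pλC̄)` (with `C = 2C̄`). The minimum of `ρp`
over `S` equals `eλC` (attained at `p = 1/(λC)`, `ρ = e(λC)²`) when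
`λC > 1`, and equals `exp(λC)` (attained at `p = 1`, `ρ = exp(λC)`) when
`λC ≤ 1`; moreover `λ` times this minimum coincides with the global optimal
spatial delay density `min_{p ∈ (0,1]} λ exp(pλC)/p`, namely `λ²eC` if
`λC > 1` and `λ exp(λC)` if `λC ≤ 1`. -/
theorem stmt_14 (lam Cb : ℝ) (hlam : 0 < lam) (hCb : 0 < Cb) :
    (1 < lam * (2 * Cb) →
      IsLeast ((fun x : ℝ × ℝ => x.1 * x.2) ''
          {x : ℝ × ℝ | 0 < x.1 ∧ x.2 ∈ Set.Ioc (0:ℝ) 1 ∧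
            x.2 * Real.sqrt x.1 = Real.exp (x.2 * lam * Cb)})
        (Real.exp 1 * lam * (2 * Cb)) ∧
      (Real.exp 1 * (lam * (2 * Cb)) ^ 2, 1 / (lam * (2 * Cb))) ∈
        {x : ℝ × ℝ | 0 < x.1 ∧ x.2 ∈ Set.Ioc (0:ℝ) 1 ∧
          x.2 * Real.sqrt x.1 = Real.exp (x.2 * lam * Cb)} ∧
      IsLeast ((fun p => lam * Real.exp (p * lam * (2 * Cb)) / p) ''
          Set.Ioc (0:ℝ) 1)
        (lam * (Real.exp 1 * lam * (2 * Cb))) ∧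
      lam * (Real.exp 1 * lam * (2 * Cb)) =
        lam ^ 2 * Real.exp 1 * (2 * Cb)) ∧
    (lam * (2 * Cb) ≤ 1 →
      IsLeast ((fun x : ℝ × ℝ => x.1 * x.2) ''
          {x : ℝ × ℝ | 0 < x.1 ∧ x.2 ∈ Set.Ioc (0:ℝ) 1 ∧
            x.2 * Real.sqrt x.1 = Real.exp (x.2 * lam * Cb)})
        (Real.exp (lam * (2 * Cb))) ∧
      (Real.exp (lam * (2 * Cb)), (1:ℝ)) ∈
        {x : ℝ × ℝ | 0 < x.1 ∧ x.2 ∈ Set.Ioc (0:ℝ) 1 ∧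
          x.2 * Real.sqrt x.1 = Real.exp (x.2 * lam * Cb)} ∧
      IsLeast ((fun p => lam * Real.exp (p * lam * (2 * Cb)) / p) ''
          Set.Ioc (0:ℝ) 1)
        (lam * Real.exp (lam * (2 * Cb)))) := by
  have hA0 : (0:ℝ) < lam * (2 * Cb) := by positivity
  constructor
  · -- case λC > 1
    intro h1
    have hpA : (0:ℝ) < 1 / (lam * (2 * Cb)) := by positivity
    have hpA1 : 1 / (lam * (2 * Cb)) ≤ 1 := by
      rw [div_le_one hA0]; linarith
    have hmem : (Real.exp 1 * (lam * (2 * Cb)) ^ 2, 1 / (lam * (2 * Cb))) ∈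
        {x : ℝ × ℝ | 0 < x.1 ∧ x.2 ∈ Set.Ioc (0:ℝ) 1 ∧
          x.2 * Real.sqrt x.1 = Real.exp (x.2 * lam * Cb)} := by
      refine ⟨by positivity, ⟨hpA, hpA1⟩, ?_⟩
      have hex : (1 / (lam * (2 * Cb))) * lam * Cb = 1 / 2 := by
        field_simp
      rw [hex]
      have hs : Real.sqrt (Real.exp 1 * (lam * (2 * Cb)) ^ 2)
          = Real.exp (1/2) * (lam * (2 * Cb)) := by
        rw [Real.sqrt_mul (Real.exp_pos 1).le, Real.sqrt_sq hA0.le, sqrt_exp']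
      rw [hs]
      field_simp
    refine ⟨⟨⟨(Real.exp 1 * (lam * (2 * Cb)) ^ 2, 1 / (lam * (2 * Cb))), hmem, ?_⟩, ?_⟩,
      hmem, ⟨⟨1 / (lam * (2 * Cb)), ⟨hpA, hpA1⟩, ?_⟩, ?_⟩, by ring⟩
    · show Real.exp 1 * (lam * (2 * Cb)) ^ 2 * (1 / (lam * (2 * Cb)))
        = Real.exp 1 * lam * (2 * Cb)
      field_simp
    · rintro y ⟨⟨ρ, p⟩, ⟨hρ, ⟨hp0, hp1⟩, heq⟩, rfl⟩
      have hrp := key_rho lam Cb ρ p hp0 hρ heq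
      show Real.exp 1 * lam * (2 * Cb) ≤ ρ * p
      rw [hrp, le_div_iff₀ hp0]
      have := exp_ge_e_mul (p * (lam * (2 * Cb)))
      nlinarith
    · show lam * Real.exp ((1 / (lam * (2 * Cb))) * lam * (2 * Cb)) / (1 / (lam * (2 * Cb)))
        = lam * (Real.exp 1 * lam * (2 * Cb))
      have he : (1 / (lam * (2 * Cb))) * lam * (2 * Cb) = 1 := by
        field_simp
      rw [he]
      field_simp
    · rintro y ⟨p, ⟨hp0, hp1⟩, rfl⟩
      show lam * (Real.exp 1 * lam * (2 * Cb)) ≤ lam * Real.exp (p * lam * (2 * Cb)) / p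
      rw [le_div_iff₀ hp0, mul_assoc p]
      have := exp_ge_e_mul (p * (lam * (2 * Cb)))
      nlinarith
  · -- case λC ≤ 1
    intro h1
    have hmem : (Real.exp (lam * (2 * Cb)), (1:ℝ)) ∈
        {x : ℝ × ℝ | 0 < x.1 ∧ x.2 ∈ Set.Ioc (0:ℝ) 1 ∧
          x.2 * Real.sqrt x.1 = Real.exp (x.2 * lam * Cb)} := by
      refine ⟨Real.exp_pos _, ⟨one_pos, le_refl 1⟩, ?_⟩
      rw [one_mul, sqrt_exp']
      congr 1
      ring
    refine ⟨⟨⟨(Real.exp (lam * (2 * Cb)), (1:ℝ)), hmem, by simp⟩, ?_⟩, hmem,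
      ⟨⟨1, ⟨one_pos, le_refl 1⟩, by norm_num⟩, ?_⟩⟩
    · rintro y ⟨⟨ρ, p⟩, ⟨hρ, ⟨hp0, hp1⟩, heq⟩, rfl⟩
      have hrp := key_rho lam Cb ρ p hp0 hρ heq
      show Real.exp (lam * (2 * Cb)) ≤ ρ * p
      rw [hrp, le_div_iff₀ hp0]
      have := exp_ge_p_mul p (lam * (2 * Cb)) hp0 hp1 h1 hA0
      nlinarith
    · rintro y ⟨p, ⟨hp0, hp1⟩, rfl⟩
      show lam * Real.exp (lam * (2 * Cb)) ≤ lam * Real.exp (p * lam * (2 * Cb)) / p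
      rw [le_div_iff₀ hp0, mul_assoc p]
      have := exp_ge_p_mul p (lam * (2 * Cb)) hp0 hp1 h1 hA0
      nlinarith
end

section
/- Fix λ > 0 and C > 0 with λC ≥ 1, and let ρ ∈ (0,1). Then there is a unique p_m ∈ [0, 1/(λC)) satisfying exp(−p_mλC)(1 − p_mλC) = ρ, this p_m is the unique maximizer over p ∈ [0,1] of the team utility U(p) = λp exp(−pλC) − λρp, and the maximum value equals λ²Cρ p_m²/(1 − p_mλC). -/
/-!
Substituting `x = pλC` turns the first-order condition `U'(p) = 0` into `g(x) = ρ` with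
`g(x) = e^{-x}(1 - x)`. Since `g'(x) = e^{-x}(x - 2)`, `g` decreases strictly on `(-∞, 2]`
from `g 0 = 1` to `g 1 = 0` and is negative beyond `1`, so `g = ρ` has a single root
`x_m ∈ (0, 1)`, and `U' = λ(g(pλC) - ρ)` is positive before `p_m = x_m/(λC)` and negative
after it. At `p_m`, `e^{-x_m} = ρ/(1 - x_m)` gives the closed form of the maximum.
-/

open Real Set

theorem hasDerivAt_exp_neg_mul_one_sub (x : ℝ) :
    HasDerivAt (fun x => exp (-x) * (1 - x)) (exp (-x) * (x - 2)) x := by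
  refine ((hasDerivAt_neg' x).exp.fun_mul ((hasDerivAt_id' x).const_sub 1)).congr_deriv ?_
  ring

theorem strictAntiOn_exp_neg_mul_one_sub :
    StrictAntiOn (fun x => exp (-x) * (1 - x)) (Iic 2) := by
  refine strictAntiOn_of_deriv_neg (convex_Iic 2) (by fun_prop) fun x hx => ?_
  rw [interior_Iic] at hx
  rw [(hasDerivAt_exp_neg_mul_one_sub x).deriv]
  exact mul_neg_of_pos_of_neg (exp_pos _) (by linarith [mem_Iio.mp hx])

theorem exp_neg_mul_one_sub_lt_of_lt {x y : ℝ} (hx : x ≤ 1) (hxy : x < y) :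
    exp (-y) * (1 - y) < exp (-x) * (1 - x) := by
  rcases le_or_gt y 2 with hy | hy
  · exact strictAntiOn_exp_neg_mul_one_sub (mem_Iic.mpr (by linarith)) (mem_Iic.mpr hy) hxy
  · have hgy : exp (-y) * (1 - y) < 0 := mul_neg_of_pos_of_neg (exp_pos _) (by linarith)
    have hgx : 0 ≤ exp (-x) * (1 - x) := mul_nonneg (exp_pos _).le (by linarith)
    linarith

theorem exists_mem_Ioo_exp_neg_mul_one_sub_eq {ρ : ℝ} (hρ : ρ ∈ Ioo (0 : ℝ) 1) :
    ∃ x ∈ Ioo (0 : ℝ) 1, exp (-x) * (1 - x) = ρ := by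
  have hρ' : ρ ∈ Ioo (exp (-1) * (1 - 1)) (exp (-0) * (1 - 0)) := by simpa using hρ
  exact intermediate_value_Ioo' zero_le_one (by fun_prop) hρ'

theorem lt_of_deriv_pos_of_deriv_neg {f : ℝ → ℝ} {m x : ℝ} (hf : Differentiable ℝ f)
    (hpos : ∀ y < m, 0 < deriv f y) (hneg : ∀ y, m < y → deriv f y < 0) (hx : x ≠ m) :
    f x < f m := by
  rcases hx.lt_or_gt with hxm | hmx
  · have hmono : StrictMonoOn f (Iic m) :=
      strictMonoOn_of_deriv_pos (convex_Iic m) hf.continuous.continuousOn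
        (by rwa [interior_Iic])
    exact hmono (mem_Iic.mpr hxm.le) self_mem_Iic hxm
  · have hanti : StrictAntiOn f (Ici m) :=
      strictAntiOn_of_deriv_neg (convex_Ici m) hf.continuous.continuousOn
        (by rwa [interior_Ici])
    exact hanti self_mem_Ici (mem_Ici.mpr hmx.le) hmx

theorem hasDerivAt_teamUtility (lam C ρ p : ℝ) :
    HasDerivAt (fun p => lam * p * exp (-(p * lam * C)) - lam * ρ * p)
      (lam * (exp (-(p * lam * C)) * (1 - p * lam * C) - ρ)) p := by
  have hexp := (((hasDerivAt_id' p).mul_const lam).mul_const C).fun_neg.exp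
  refine ((((hasDerivAt_id' p).const_mul lam).fun_mul hexp).fun_sub
    ((hasDerivAt_id' p).const_mul (lam * ρ))).congr_deriv ?_
  ring

theorem teamUtility_eq_of_root {lam C ρ p : ℝ}
    (hroot : exp (-(p * lam * C)) * (1 - p * lam * C) = ρ) (hp : p * lam * C ≠ 1) :
    lam * p * exp (-(p * lam * C)) - lam * ρ * p =
      lam ^ 2 * C * ρ * p ^ 2 / (1 - p * lam * C) := by
  rw [eq_div_iff (sub_ne_zero.mpr hp.symm), ← hroot]
  ring

theorem teamUtility_lt_of_root {lam C ρ pm p : ℝ} (hlam : 0 < lam) (hC : 0 < C)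
    (hroot : exp (-(pm * lam * C)) * (1 - pm * lam * C) = ρ) (hpm : pm * lam * C ≤ 1)
    (hp : p ≠ pm) :
    lam * p * exp (-(p * lam * C)) - lam * ρ * p <
      lam * pm * exp (-(pm * lam * C)) - lam * ρ * pm := by
  have hscale {y z : ℝ} (hyz : y < z) : y * lam * C < z * lam * C := by
    simpa only [mul_assoc] using mul_lt_mul_of_pos_right hyz (mul_pos hlam hC)
  refine lt_of_deriv_pos_of_deriv_neg
    (fun y => (hasDerivAt_teamUtility lam C ρ y).differentiableAt)
    (fun y hy => ?_) (fun y hy => ?_) hp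
  all_goals rw [(hasDerivAt_teamUtility lam C ρ y).deriv]
  · have hg := strictAntiOn_exp_neg_mul_one_sub (mem_Iic.mpr (by linarith [hscale hy]))
      (mem_Iic.mpr (by linarith)) (hscale hy)
    exact mul_pos hlam (sub_pos.mpr (hroot ▸ hg))
  · have hg := exp_neg_mul_one_sub_lt_of_lt hpm (hscale hy)
    exact mul_neg_of_pos_of_neg hlam (sub_neg.mpr (hroot ▸ hg))

/-- For `λC ≥ 1` and `ρ ∈ (0,1)`, there is a unique
`p_m ∈ [0, 1/(λC))` with `exp(−p_mλC)(1 − p_mλC) = ρ`; this `p_m` is the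
unique maximizer over `p ∈ [0,1]` of the team utility
`U(p) = λp exp(−pλC) − λρp`, and the maximum value equals
`λ²Cρ p_m²/(1 − p_mλC)`. -/
theorem stmt_15 (lam C ρ : ℝ) (hlam : 0 < lam) (hC : 0 < C)
    (h1 : 1 ≤ lam * C) (hρ : ρ ∈ Set.Ioo (0:ℝ) 1) :
    ∃ pm : ℝ,
      pm ∈ Set.Ico (0:ℝ) (1 / (lam * C)) ∧
      Real.exp (-(pm * lam * C)) * (1 - pm * lam * C) = ρ ∧
      (∀ q ∈ Set.Ico (0:ℝ) (1 / (lam * C)),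
        Real.exp (-(q * lam * C)) * (1 - q * lam * C) = ρ → q = pm) ∧
      pm ∈ Set.Icc (0:ℝ) 1 ∧
      (∀ p ∈ Set.Icc (0:ℝ) 1, p ≠ pm →
        lam * p * Real.exp (-(p * lam * C)) - lam * ρ * p <
          lam * pm * Real.exp (-(pm * lam * C)) - lam * ρ * pm) ∧
      lam * pm * Real.exp (-(pm * lam * C)) - lam * ρ * pm =
        lam ^ 2 * C * ρ * pm ^ 2 / (1 - pm * lam * C) := by
  obtain ⟨xm, ⟨hxm0, hxm1⟩, hroot⟩ := exists_mem_Ioo_exp_neg_mul_one_sub_eq hρ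
  have ha : 0 < lam * C := mul_pos hlam hC
  have hscale (q : ℝ) : q * lam * C = q * (lam * C) := mul_assoc q lam C
  have hpm : xm / (lam * C) * lam * C = xm := by rw [hscale, div_mul_cancel₀ xm ha.ne']
  have hIco {q : ℝ} : q ∈ Ico (0 : ℝ) (1 / (lam * C)) ↔ q * lam * C ∈ Ico (0 : ℝ) 1 := by
    simp only [mem_Ico, hscale, lt_div_iff₀ ha, mul_nonneg_iff_of_pos_right ha]
  have hroot' :
      exp (-(xm / (lam * C) * lam * C)) * (1 - xm / (lam * C) * lam * C) = ρ := by
    rwa [hpm]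
  refine ⟨xm / (lam * C), hIco.mpr (by rw [hpm]; exact ⟨hxm0.le, hxm1⟩), hroot',
    fun q hq hqroot => ?_, ⟨by positivity, (div_le_one ha).mpr (by linarith)⟩,
    fun p _ hp => teamUtility_lt_of_root hlam hC hroot' (by rw [hpm]; exact hxm1.le) hp,
    teamUtility_eq_of_root hroot' (by rw [hpm]; exact hxm1.ne)⟩
  have hq2 : q * lam * C ≤ 2 := by linarith [(hIco.mp hq).2]
  have hx : q * lam * C = xm := strictAntiOn_exp_neg_mul_one_sub.injOn (mem_Iic.mpr hq2)
    (mem_Iic.mpr (by linarith)) (hqroot.trans hroot.symm)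
  rw [← hpm, hscale, hscale] at hx
  exact mul_right_cancel₀ ha.ne' hx
end

section
/- Fix λ > 0 and C > 0 with λC ≥ 1. The function ρ ↦ max over p ∈ [0,1] of (λp exp(−pλC) − λρp) is strictly decreasing on the interval (0,1). -/
/-!
For `ρ < 1` the utility `λp (e^{-pλC} - ρ)` is positive for small `p > 0`, so the maximum at
price `ρ₂` is attained at some `p > 0`; there the utility at a smaller price `ρ₁` is larger by
`λ(ρ₂ - ρ₁)p > 0`.
-/

open Set Filter Topology

lemma sSup_image_sub_mul_lt_of_lt {f : ℝ → ℝ} {K : Set ℝ} (hK : IsCompact K)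
    (hK0 : K ⊆ Ici 0) (hf : ContinuousOn f K) {a b : ℝ} (hab : a < b)
    (hgain : ∃ q ∈ K, f 0 < f q - b * q) :
    sSup ((fun p => f p - b * p) '' K) < sSup ((fun p => f p - a * p) '' K) := by
  have hcompact : ∀ c : ℝ, IsCompact ((fun p => f p - c * p) '' K) := fun c =>
    hK.image_of_continuousOn (hf.sub (continuousOn_const.mul continuousOn_id))
  obtain ⟨q, hqK, hq⟩ := hgain
  obtain ⟨p, hpK, hp⟩ := (hcompact b).sSup_mem ⟨_, mem_image_of_mem _ hqK⟩
  have hqp : f q - b * q ≤ f p - b * p := by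
    have := le_csSup (hcompact b).bddAbove (mem_image_of_mem _ hqK)
    rwa [← hp] at this
  have hp_pos : 0 < p := by
    refine lt_of_le_of_ne (hK0 hpK) ?_
    rintro rfl
    linarith
  calc sSup ((fun p => f p - b * p) '' K) = f p - b * p := hp.symm
    _ < f p - a * p := by nlinarith
    _ ≤ sSup ((fun p => f p - a * p) '' K) :=
      le_csSup (hcompact a).bddAbove (mem_image_of_mem _ hpK)

lemma exists_mem_Ioc_lt_exp_mul (k : ℝ) {ρ : ℝ} (hρ : ρ < 1) :
    ∃ p ∈ Ioc (0 : ℝ) 1, ρ < Real.exp (-(p * k)) := by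
  have hcont : Tendsto (fun p : ℝ => Real.exp (-(p * k))) (𝓝[>] 0) (𝓝 1) := by
    have : Continuous (fun p : ℝ => Real.exp (-(p * k))) := by fun_prop
    simpa using (this.tendsto 0).mono_left nhdsWithin_le_nhds
  have hIoc : ∀ᶠ p in 𝓝[>] (0 : ℝ), p ∈ Ioc (0 : ℝ) 1 := Ioc_mem_nhdsGT one_pos
  exact (hIoc.and (hcont.eventually (lt_mem_nhds hρ))).exists

theorem stmt_16_general (lam C : ℝ) (hlam : 0 < lam) :
    StrictAntiOn
      (fun ρ => sSup ((fun p => lam * p * Real.exp (-(p * lam * C)) - lam * ρ * p) ''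
        Set.Icc (0:ℝ) 1))
      (Set.Ioo (0:ℝ) 1) := by
  intro ρ₁ _ ρ₂ hρ₂ hlt
  obtain ⟨q, hq, hexp⟩ := exists_mem_Ioc_lt_exp_mul (lam * C) hρ₂.2
  refine sSup_image_sub_mul_lt_of_lt (f := fun p => lam * p * Real.exp (-(p * lam * C)))
    isCompact_Icc (fun p hp => hp.1) (by fun_prop) (mul_lt_mul_of_pos_left hlt hlam)
    ⟨q, Ioc_subset_Icc_self hq, ?_⟩
  rw [← mul_assoc] at hexp
  have hgain := mul_lt_mul_of_pos_left hexp (mul_pos hlam hq.1)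
  simp only [zero_mul, mul_zero]
  linarith

/-- For `λ > 0` and `C > 0` with `λC ≥ 1`, the optimal team
utility `ρ ↦ max_{p ∈ [0,1]} (λp exp(−pλC) − λρp)` is strictly decreasing
on `(0,1)`. -/
theorem stmt_16 (lam C : ℝ) (hlam : 0 < lam) (hC : 0 < C)
    (h1 : 1 ≤ lam * C) :
    StrictAntiOn
      (fun ρ => sSup ((fun p => lam * p * Real.exp (-(p * lam * C)) - lam * ρ * p) ''
        Set.Icc (0:ℝ) 1))
      (Set.Ioo (0:ℝ) 1) :=
  stmt_16_general lam C hlam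
end

section
/- Fix λ > 0 and C > 0 with λC ≥ 1, and let 0 < ρ < exp(−λC). Let p_m ∈ [0, 1/(λC)) be the unique solution of exp(−p_mλC)(1 − p_mλC) = ρ. Then the price of anarchy of the goodput-based game, defined as the ratio of the maximal team utility max_{p∈[0,1]}(λp exp(−pλC) − λρp) to the equilibrium spatial utility λ(exp(−λC) − ρ), equals λCρ p_m² / ((1 − p_mλC)(exp(−λC) − ρ)). Moreover, for ρ ≥ exp(−λC) the utility of each node at the symmetric Nash equilibrium is 0 (so the price of anarchy is infinite). -/
/-!
The team utility is `(x e^{-x} - ρ x) / C` in the variable `x = pλC`. On `x ≥ 0` the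
function `x e^{-x}` lies below its tangent at any `a ≤ 1`; choosing `a = p_mλC`,
where the tangent has slope `e^{-a}(1 - a) = ρ`, shows that `p_m` maximizes the team utility,
and its value `λ² C p_m² e^{-a}` gives the ratio after substituting `e^{-a} = ρ / (1 - a)`.
At a symmetric equilibrium each node best-responds to a payoff linear in its own MAP, so its
utility is `max (e^{-pλC} - ρ) 0`, which vanishes once `ρ ≥ e^{-λC}`.
-/

open Real Set

lemma mul_exp_neg_le_tangent {x a : ℝ} (hx : 0 ≤ x) (ha : a ≤ 1) :
    x * exp (-x) ≤ exp (-a) * (a ^ 2 + x * (1 - a)) := by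
  rcases hx.eq_or_lt with rfl | hx
  · simp only [neg_zero, exp_zero, mul_one, zero_mul, add_zero]
    positivity
  have hpos : 0 < 1 + (x - a) := by linarith
  have hsplit : exp (-x) = exp (-a) * exp (a - x) := by rw [← exp_add]; ring_nf
  -- `1 + (x - a) ≤ e^{x - a}` bounds `e^{a - x}` by `1 / (1 + (x - a))`
  have hexp : exp (a - x) * (1 + (x - a)) ≤ 1 := by
    calc exp (a - x) * (1 + (x - a)) ≤ exp (a - x) * exp (x - a) := by
          gcongr; linarith [add_one_le_exp (x - a)]
      _ = 1 := by rw [← exp_add]; simp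
  have hbound : x * exp (a - x) ≤ a ^ 2 + x * (1 - a) := by
    refine le_of_mul_le_mul_right ?_ hpos
    nlinarith [mul_nonneg (sq_nonneg (x - a)) (sub_nonneg.2 ha)]
  calc x * exp (-x) = exp (-a) * (x * exp (a - x)) := by rw [hsplit]; ring
    _ ≤ exp (-a) * (a ^ 2 + x * (1 - a)) := by gcongr

lemma mul_exp_neg_sub_le_of_tangent_slope {x a ρ : ℝ} (hx : 0 ≤ x) (ha : a ≤ 1)
    (hρ : exp (-a) * (1 - a) = ρ) :
    x * exp (-x) - ρ * x ≤ a * exp (-a) - ρ * a := by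
  have := mul_exp_neg_le_tangent hx ha
  subst hρ
  linarith

noncomputable def teamUtility (lam C ρ p : ℝ) : ℝ :=
  lam * p * exp (-(p * lam * C)) - lam * ρ * p

lemma teamUtility_le_of_tangent_slope {lam C ρ p pm : ℝ} (hlam : 0 ≤ lam) (hC : 0 < C)
    (hp : 0 ≤ p) (hpm : pm * lam * C ≤ 1)
    (hρ : exp (-(pm * lam * C)) * (1 - pm * lam * C) = ρ) :
    teamUtility lam C ρ p ≤ teamUtility lam C ρ pm := by
  have key := mul_exp_neg_sub_le_of_tangent_slope (x := p * lam * C) (by positivity) hpm hρ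
  refine le_of_mul_le_mul_right ?_ hC
  unfold teamUtility
  linarith

lemma mul_eq_max_zero_of_forall_mul_le {p D : ℝ} (hp : p ∈ Icc (0 : ℝ) 1)
    (hbest : ∀ q ∈ Icc (0 : ℝ) 1, q * D ≤ p * D) :
    p * D = max D 0 := by
  refine le_antisymm ?_ (max_le ?_ ?_)
  · rcases le_total 0 D with hD | hD
    · exact (mul_le_of_le_one_left hD hp.2).trans (le_max_left D 0)
    · exact (mul_nonpos_of_nonneg_of_nonpos hp.1 hD).trans (le_max_right D 0)
  · simpa using hbest 1 ⟨zero_le_one, le_rfl⟩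
  · simpa using hbest 0 ⟨le_rfl, zero_le_one⟩

theorem stmt_17_general (lam C ρ pm : ℝ) (hlam : 0 < lam) (hC : 0 < C)
    (h1 : 1 ≤ lam * C) (hρ1 : ρ < Real.exp (-(lam * C)))
    (hpm : pm ∈ Set.Ico (0:ℝ) (1 / (lam * C)))
    (hpmeq : Real.exp (-(pm * lam * C)) * (1 - pm * lam * C) = ρ) :
    sSup ((fun p => lam * p * Real.exp (-(p * lam * C)) - lam * ρ * p) ''
          Set.Icc (0:ℝ) 1) /
        (lam * (Real.exp (-(lam * C)) - ρ)) =
      lam * C * ρ * pm ^ 2 /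
        ((1 - pm * lam * C) * (Real.exp (-(lam * C)) - ρ)) ∧
    (∀ ρ' : ℝ, Real.exp (-(lam * C)) ≤ ρ' →
      ∀ p ∈ Set.Icc (0:ℝ) 1,
        (∀ q ∈ Set.Icc (0:ℝ) 1,
          q * (Real.exp (-(p * lam * C)) - ρ') ≤
            p * (Real.exp (-(p * lam * C)) - ρ')) →
        p * (Real.exp (-(p * lam * C)) - ρ') = 0) := by
  obtain ⟨hpm0, hpm1⟩ := hpm
  have hlamC : 0 < lam * C := one_pos.trans_le h1
  have ha : pm * lam * C < 1 := by rw [lt_div_iff₀ hlamC] at hpm1; linarith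
  have hpm_le_one : pm ≤ 1 := hpm1.le.trans ((div_le_one hlamC).2 h1)
  refine ⟨?_, fun ρ' hρ' p hp hbest => ?_⟩
  · have hmax : IsGreatest (teamUtility lam C ρ '' Icc 0 1) (teamUtility lam C ρ pm) :=
      ⟨⟨pm, ⟨hpm0, hpm_le_one⟩, rfl⟩, by
        rintro _ ⟨p, hp, rfl⟩
        exact teamUtility_le_of_tangent_slope hlam.le hC hp.1 ha.le hpmeq⟩
    change sSup (teamUtility lam C ρ '' Icc 0 1) / _ = _
    rw [hmax.csSup_eq, teamUtility,
      div_eq_div_iff (by nlinarith) (mul_ne_zero (by linarith) (by linarith))]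
    linear_combination (lam * pm * (exp (-(lam * C)) - ρ)) * hpmeq
  · have hutil := mul_eq_max_zero_of_forall_mul_le hp hbest
    have hD : exp (-(p * lam * C)) - ρ' ≤ 0 := by
      rcases hp.2.eq_or_lt with rfl | hp1
      · simpa using hρ'
      · nlinarith [le_max_left (exp (-(p * lam * C)) - ρ') 0]
    rw [hutil, max_eq_right hD]

/-- For `λC ≥ 1` and `0 < ρ < exp(−λC)`, with `p_m` the unique
solution in `[0, 1/(λC))` of `exp(−p_mλC)(1 − p_mλC) = ρ`, the price of
anarchy of the goodput-based game — the ratio of the maximal team utility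
`max_{p∈[0,1]} (λp exp(−pλC) − λρp)` to the equilibrium spatial utility
`λ(exp(−λC) − ρ)` — equals `λCρ p_m²/((1 − p_mλC)(exp(−λC) − ρ))`.
Moreover, for any price `ρ′ ≥ exp(−λC)`, the utility of each node at any
symmetric Nash equilibrium is `0`. -/
theorem stmt_17 (lam C ρ pm : ℝ) (hlam : 0 < lam) (hC : 0 < C)
    (h1 : 1 ≤ lam * C) (hρ0 : 0 < ρ) (hρ1 : ρ < Real.exp (-(lam * C)))
    (hpm : pm ∈ Set.Ico (0:ℝ) (1 / (lam * C)))
    (hpmeq : Real.exp (-(pm * lam * C)) * (1 - pm * lam * C) = ρ) :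
    sSup ((fun p => lam * p * Real.exp (-(p * lam * C)) - lam * ρ * p) ''
          Set.Icc (0:ℝ) 1) /
        (lam * (Real.exp (-(lam * C)) - ρ)) =
      lam * C * ρ * pm ^ 2 /
        ((1 - pm * lam * C) * (Real.exp (-(lam * C)) - ρ)) ∧
    (∀ ρ' : ℝ, Real.exp (-(lam * C)) ≤ ρ' →
      ∀ p ∈ Set.Icc (0:ℝ) 1,
        (∀ q ∈ Set.Icc (0:ℝ) 1,
          q * (Real.exp (-(p * lam * C)) - ρ') ≤
            p * (Real.exp (-(p * lam * C)) - ρ')) →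
        p * (Real.exp (-(p * lam * C)) - ρ') = 0) :=
  stmt_17_general lam C ρ pm hlam hC h1 hρ1 hpm hpmeq
end

section
/- Fix λ > 0, C̄ > 0, ρ > 0 and write C = 2C̄. Suppose p_m ∈ (0, 1/(λC)) satisfies exp(p_mλC)(1 − p_mλC) = ρ p_m², and p* ∈ (0,1] satisfies p*√ρ = exp(p*λC̄). Then (exp(p_mλC)/p_m + ρp_m) / (exp(p*λC)/p* + ρp*) = p_m(2 − p_mλC) / (2p*(1 − p_mλC)); in particular this ratio is at least p_m/p*. -/
/-!
At a symmetric equilibrium the fixed-point equation squares to `exp(p*λC) = ρ p*²`, so the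
equilibrium disutility is `2ρp*`; at the team optimum the first-order condition gives
`exp(p_mλC) = ρ p_m² / (1 − p_mλC)`, so the optimal disutility is `ρ p_m (2 − x)/(1 − x)` with
`x = p_mλC`. The ratio is then explicit, and `(2 − x)/(2(1 − x)) ≥ 1` for `0 ≤ x < 1`.
-/

open Real

noncomputable def disutility (lam C ρ p : ℝ) : ℝ := exp (p * lam * C) / p + ρ * p

lemma disutility_of_nash {lam Cb ρ p : ℝ} (hρ : 0 ≤ ρ) (hp : p ≠ 0)
    (hfix : p * √ρ = exp (p * lam * Cb)) :
    disutility lam (2 * Cb) ρ p = 2 * ρ * p := by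
  have hexp : exp (p * lam * (2 * Cb)) = ρ * p ^ 2 := by
    calc exp (p * lam * (2 * Cb)) = exp (p * lam * Cb) ^ 2 := by
          rw [← exp_nat_mul]; ring_nf
      _ = ρ * p ^ 2 := by rw [← hfix, mul_pow, sq_sqrt hρ, mul_comm]
  rw [disutility, hexp]
  field_simp
  ring

lemma disutility_of_optimal {lam C ρ p : ℝ} (hp : p ≠ 0) (hx : 1 - p * lam * C ≠ 0)
    (hopt : exp (p * lam * C) * (1 - p * lam * C) = ρ * p ^ 2) :
    disutility lam C ρ p = ρ * p * (2 - p * lam * C) / (1 - p * lam * C) := by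
  have hexp : exp (p * lam * C) = ρ * p ^ 2 / (1 - p * lam * C) := by
    rw [← hopt, mul_div_cancel_right₀ _ hx]
  rw [disutility, hexp]
  field_simp
  ring

lemma div_le_mul_two_sub_div {a b x : ℝ} (ha : 0 ≤ a) (hb : 0 < b) (hx0 : 0 ≤ x)
    (hx1 : x < 1) : a / b ≤ a * (2 - x) / (2 * b * (1 - x)) := by
  rw [div_le_div_iff₀ hb (by nlinarith)]
  nlinarith [mul_nonneg (mul_nonneg ha hb.le) hx0]

/-- With `C = 2C̄`, if `p_m ∈ (0, 1/(λC))` satisfies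
`exp(p_mλC)(1 − p_mλC) = ρ p_m²` and `p* ∈ (0,1]` satisfies
`p*√ρ = exp(p*λC̄)`, then
`(exp(p_mλC)/p_m + ρp_m)/(exp(p*λC)/p* + ρp*) =
  p_m(2 − p_mλC)/(2p*(1 − p_mλC))`, and this ratio is at least `p_m/p*`. -/
theorem stmt_18 (lam Cb ρ pm pstar : ℝ) (hlam : 0 < lam) (hCb : 0 < Cb)
    (hρ : 0 < ρ)
    (hpm : pm ∈ Set.Ioo (0:ℝ) (1 / (lam * (2 * Cb))))
    (hpmeq : Real.exp (pm * lam * (2 * Cb)) * (1 - pm * lam * (2 * Cb)) =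
      ρ * pm ^ 2)
    (hps : pstar ∈ Set.Ioc (0:ℝ) 1)
    (hfix : pstar * Real.sqrt ρ = Real.exp (pstar * lam * Cb)) :
    (Real.exp (pm * lam * (2 * Cb)) / pm + ρ * pm) /
        (Real.exp (pstar * lam * (2 * Cb)) / pstar + ρ * pstar) =
      pm * (2 - pm * lam * (2 * Cb)) /
        (2 * pstar * (1 - pm * lam * (2 * Cb))) ∧
    pm / pstar ≤
      (Real.exp (pm * lam * (2 * Cb)) / pm + ρ * pm) /
        (Real.exp (pstar * lam * (2 * Cb)) / pstar + ρ * pstar) := by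
  obtain ⟨hpm0, hpm1⟩ := hpm
  have hx0 : 0 ≤ pm * lam * (2 * Cb) := by positivity
  have hx1 : pm * lam * (2 * Cb) < 1 := by
    rwa [lt_div_iff₀ (by positivity), ← mul_assoc] at hpm1
  have hratio : disutility lam (2 * Cb) ρ pm / disutility lam (2 * Cb) ρ pstar =
      pm * (2 - pm * lam * (2 * Cb)) / (2 * pstar * (1 - pm * lam * (2 * Cb))) := by
    rw [disutility_of_optimal hpm0.ne' (by linarith) hpmeq,
      disutility_of_nash hρ.le hps.1.ne' hfix]
    field_simp
  refine ⟨hratio, ?_⟩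
  rw [← disutility, ← disutility, hratio]
  exact div_le_mul_two_sub_div hpm0.le hps.1 hx0 hx1
end
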